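/- arXiv:0711.1351 — 7 statements merged into one kernel-verified Lean document; each statement's English description precedes it below -/
import Mathlib

section
/- Let A be a finite boolean algebra whose atoms all have the same measure under a finitely additive probability measure μ. Then every measure preserving isomorphism g between two subalgebras B and C of A extends to a measure preserving automorphism of A. -/
/-- `μ` is a finitely additive probability measure on the boolean algebra `A`. -/
def IsFinAddProb {A : Type*} [BooleanAlgebra A] (μ : A → ℝ) : Prop :=
  μ ⊥ = 0 ∧ μ ⊤ = 1 ∧ ∀ x y : A, x ⊓ y = ⊥ → μ (x ⊔ y) = μ x + μ y

/-- `S` is a (boolean) subalgebra of the boolean algebra `A`. -/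
def IsSubalgebra {A : Type*} [BooleanAlgebra A] (S : Set A) : Prop :=
  ⊥ ∈ S ∧ ⊤ ∈ S ∧ (∀ x ∈ S, xᶜ ∈ S) ∧ (∀ x ∈ S, ∀ y ∈ S, x ⊔ y ∈ S) ∧
    ∀ x ∈ S, ∀ y ∈ S, x ⊓ y ∈ S

attribute [local instance] Classical.propDecidable

section Aux

variable {A : Type*} [BooleanAlgebra A]

lemma s4_atom_le_sup {a x y : A} (ha : IsAtom a) : a ≤ x ⊔ y ↔ a ≤ x ∨ a ≤ y := by
  constructor
  · intro h
    have h1 : (a ⊓ x) ⊔ (a ⊓ y) = a := by rw [← inf_sup_left, inf_eq_left.mpr h]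
    by_cases hx2 : a ≤ x
    · exact Or.inl hx2
    · right
      have h2 : a ⊓ x = ⊥ :=
        (ha.le_iff.mp inf_le_left).resolve_right fun hh => hx2 (inf_eq_left.mp hh)
      have h3 : a ⊓ y = a := by
        conv_rhs => rw [← h1]
        rw [h2, bot_sup_eq]
      exact inf_eq_left.mp h3
  · rintro (h | h)
    exacts [h.trans le_sup_left, h.trans le_sup_right]

lemma s4_atom_le_finsup {a : A} (ha : IsAtom a) {α : Type*} {S : Finset α} {f : α → A} :
    a ≤ S.sup f ↔ ∃ b ∈ S, a ≤ f b := by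
  induction S using Finset.cons_induction with
  | empty => simp [le_bot_iff, ha.1]
  | cons b S hb ih =>
    rw [Finset.sup_cons, s4_atom_le_sup ha, ih]
    simp [Finset.mem_cons, or_and_right, exists_or]

variable [Fintype A]

/-- The finset of atoms below `x`. -/
noncomputable def atomsB (x : A) : Finset A :=
  Finset.univ.filter fun a => IsAtom a ∧ a ≤ x

lemma mem_atomsB {x a : A} : a ∈ atomsB x ↔ IsAtom a ∧ a ≤ x := by
  simp [atomsB]

lemma sup_atomsB (x : A) : (atomsB x).sup id = x := by
  apply le_antisymm
  · exact Finset.sup_le fun a ha => (mem_atomsB.mp ha).2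
  · by_contra hx
    have hne : x \ ((atomsB x).sup id) ≠ ⊥ := fun h => hx (sdiff_eq_bot_iff.mp h)
    obtain ⟨a, ha, hle⟩ := (eq_bot_or_exists_atom_le _).resolve_left hne
    have hax : a ≤ x := hle.trans sdiff_le
    have hmem : a ∈ atomsB x := mem_atomsB.mpr ⟨ha, hax⟩
    have h1 : a ≤ (atomsB x).sup id := Finset.le_sup (f := id) hmem
    have h2 : a ≤ ((atomsB x).sup id)ᶜ := hle.trans (by rw [sdiff_eq]; exact inf_le_right)
    exact ha.1 (le_bot_iff.mp (by
      calc a ≤ (atomsB x).sup id ⊓ ((atomsB x).sup id)ᶜ := le_inf h1 h2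
      _ = ⊥ := inf_compl_eq_bot))

lemma atomsB_sup {x : A} {f : A → A} (hf : ∀ a ∈ atomsB x, IsAtom (f a)) :
    atomsB ((atomsB x).sup f) = (atomsB x).image f := by
  ext c
  constructor
  · intro hc
    obtain ⟨hcat, hle⟩ := mem_atomsB.mp hc
    obtain ⟨b, hb, hcb⟩ := (s4_atom_le_finsup hcat).mp hle
    exact Finset.mem_image.mpr ⟨b, hb, (((hf b hb).le_iff.mp hcb).resolve_left hcat.1).symm⟩
  · intro hc
    obtain ⟨b, hb, rfl⟩ := Finset.mem_image.mp hc
    exact mem_atomsB.mpr ⟨hf b hb, Finset.le_sup hb⟩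

lemma s4_meas_sup (μ : A → ℝ) (hμ : IsFinAddProb μ) (S : Finset A)
    (hS : ∀ a ∈ S, IsAtom a) : μ (S.sup id) = ∑ a ∈ S, μ a := by
  induction S using Finset.cons_induction with
  | empty => simpa using hμ.1
  | cons b S hb ih =>
    have hdisj : Disjoint b (S.sup id) :=
      Finset.disjoint_sup_right.mpr fun a ha =>
        (hS b (Finset.mem_cons_self b S)).disjoint_of_ne
          (hS a (Finset.mem_cons_of_mem ha)) (by rintro rfl; exact hb ha)
    rw [Finset.sup_cons, Finset.sum_cons,
      ← ih fun a ha => hS a (Finset.mem_cons_of_mem ha)]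
    exact hμ.2.2 _ _ (disjoint_iff.mp hdisj)

/-- Pick function: transports an element of `s` to an element of `t` via a chosen
bijection when the cardinalities agree. -/
noncomputable def pickFn (s t : Finset A) : A → A := fun a =>
  if h : a ∈ s ∧ s.card = t.card then ((Finset.equivOfCardEq h.2) ⟨a, h.1⟩ : A) else a

lemma pickFn_mem {s t : Finset A} (h : s.card = t.card) {a : A} (ha : a ∈ s) :
    pickFn s t a ∈ t := by
  rw [pickFn, dif_pos ⟨ha, h⟩]
  exact Finset.coe_mem _

lemma pickFn_injOn {s t : Finset A} (h : s.card = t.card) {a b : A}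
    (ha : a ∈ s) (hb : b ∈ s) (hab : pickFn s t a = pickFn s t b) : a = b := by
  rw [pickFn, dif_pos ⟨ha, h⟩, pickFn, dif_pos ⟨hb, h⟩] at hab
  have := (Finset.equivOfCardEq h).injective (Subtype.ext hab)
  exact congrArg Subtype.val this

end Aux

/-- Let `A` be a finite boolean algebra whose atoms all have the same measure under a finitely
additive probability measure `μ` (an equidistributed algebra). Then every measure preserving
isomorphism `g` between two subalgebras `B` and `C` of `A` extends to a measure preserving
automorphism of `A`. -/
theorem stmt4 {A : Type*} [BooleanAlgebra A] [Fintype A]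
    (μ : A → ℝ) (hμ : IsFinAddProb μ)
    (hequi : ∀ a a' : A, IsAtom a → IsAtom a' → μ a = μ a')
    (B C : Set A) (hB : IsSubalgebra B) (hC : IsSubalgebra C)
    (g : A → A) (hgbij : Set.BijOn g B C)
    (hgsup : ∀ x ∈ B, ∀ y ∈ B, g (x ⊔ y) = g x ⊔ g y)
    (hginf : ∀ x ∈ B, ∀ y ∈ B, g (x ⊓ y) = g x ⊓ g y)
    (hgbot : g ⊥ = ⊥) (hgtop : g ⊤ = ⊤)
    (hgmeas : ∀ x ∈ B, μ (g x) = μ x) :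
    ∃ h : A ≃o A, (∀ x : A, μ (h x) = μ x) ∧ ∀ x ∈ B, h x = g x := by
  classical
  obtain ⟨hBbot, hBtop, hBcompl, hBsup2, hBinf2⟩ := hB
  -- the algebra is nontrivial, so it has an atom; `c` is the common atom measure
  have hne : (⊤ : A) ≠ ⊥ := fun h => one_ne_zero (by rw [← hμ.2.1, h, hμ.1])
  obtain ⟨a₀, ha₀, -⟩ := (eq_bot_or_exists_atom_le (⊤ : A)).resolve_left hne
  set c : ℝ := μ a₀ with hc
  have hatomμ : ∀ a : A, IsAtom a → μ a = c := fun a ha => hequi a a₀ ha ha₀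
  have hmeascard : ∀ x : A, μ x = (atomsB x).card * c := by
    intro x
    calc μ x = μ ((atomsB x).sup id) := by rw [sup_atomsB]
      _ = ∑ a ∈ atomsB x, μ a := s4_meas_sup μ hμ _ fun a ha => (mem_atomsB.mp ha).1
      _ = ∑ _a ∈ atomsB x, c := Finset.sum_congr rfl fun a ha => hatomμ a (mem_atomsB.mp ha).1
      _ = (atomsB x).card * c := by rw [Finset.sum_const, nsmul_eq_mul]
  have hc0 : c ≠ 0 := by
    intro h
    have h1 := hmeascard ⊤
    rw [hμ.2.1, h, mul_zero] at h1
    exact one_ne_zero h1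
  have hcardeq : ∀ x y : A, μ x = μ y → (atomsB x).card = (atomsB y).card := by
    intro x y hxy
    have h1 : ((atomsB x).card : ℝ) * c = ((atomsB y).card : ℝ) * c := by
      rw [← hmeascard, ← hmeascard, hxy]
    exact_mod_cast mul_right_cancel₀ hc0 h1
  -- the `B`-closure of an element
  set Bcl : A → A := fun a => (Finset.univ.filter fun x => x ∈ B ∧ a ≤ x).inf id with hBcl
  have hBclB : ∀ a : A, Bcl a ∈ B := by
    intro a
    have key : ∀ T : Finset A, (∀ x ∈ T, x ∈ B) → T.inf id ∈ B := by
      intro T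
      induction T using Finset.cons_induction with
      | empty => simpa using hBtop
      | cons b T hb ih =>
        intro hT
        rw [Finset.inf_cons]
        exact hBinf2 _ (hT b (Finset.mem_cons_self b T)) _
          (ih fun x hx => hT x (Finset.mem_cons_of_mem hx))
    exact key _ fun x hx => ((Finset.mem_filter.mp hx).2).1
  have hleBcl : ∀ a : A, a ≤ Bcl a := fun a =>
    Finset.le_inf fun x hx => ((Finset.mem_filter.mp hx).2).2
  have hBcl_le : ∀ a x : A, x ∈ B → a ≤ x → Bcl a ≤ x := fun a x hx hax =>
    Finset.inf_le (Finset.mem_filter.mpr ⟨Finset.mem_univ x, hx, hax⟩)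
  have hBclbot : ∀ a : A, IsAtom a → Bcl a ≠ ⊥ := fun a ha h =>
    ha.1 (le_bot_iff.mp (h ▸ hleBcl a))
  have hBclatom : ∀ a : A, IsAtom a → ∀ x ∈ B, x ≤ Bcl a → x = ⊥ ∨ x = Bcl a := by
    intro a ha x hxB hxle
    have hsplit : a ≤ x ∨ a ≤ xᶜ := (s4_atom_le_sup ha).mp (by rw [sup_compl_eq_top]; exact le_top)
    rcases hsplit with h | h
    · exact Or.inr (le_antisymm hxle (hBcl_le a x hxB h))
    · left
      have h1 : Bcl a ≤ xᶜ := hBcl_le a (xᶜ) (hBcompl x hxB) h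
      have h2 : x ≤ xᶜ := hxle.trans h1
      have h3 : x ⊓ xᶜ = x := inf_eq_left.mpr h2
      rw [inf_compl_eq_bot] at h3
      exact h3.symm
  have hBcl_disj : ∀ a a' : A, IsAtom a → IsAtom a' → Bcl a ≠ Bcl a' →
      Bcl a ⊓ Bcl a' = ⊥ := by
    intro a a' ha ha' hnee
    rcases hBclatom a ha (Bcl a ⊓ Bcl a') (hBinf2 _ (hBclB a) _ (hBclB a')) inf_le_left
      with h | h
    · exact h
    · have h2 : Bcl a ≤ Bcl a' := h ▸ inf_le_right
      rcases hBclatom a' ha' (Bcl a) (hBclB a) h2 with h3 | h3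
      · exact absurd h3 (hBclbot a ha)
      · exact absurd h3 hnee
  -- facts about g
  have hgmono : ∀ x ∈ B, ∀ y ∈ B, x ≤ y → g x ≤ g y := by
    intro x hx y hy hxy
    have h1 : g (x ⊔ y) = g x ⊔ g y := hgsup x hx y hy
    rw [sup_eq_right.mpr hxy] at h1
    calc g x ≤ g x ⊔ g y := le_sup_left
      _ = g y := h1.symm
  have hgcompl : ∀ x ∈ B, g (xᶜ) = (g x)ᶜ := by
    intro x hx
    have h1 : g x ⊓ g (xᶜ) = ⊥ := by
      rw [← hginf x hx (xᶜ) (hBcompl x hx), inf_compl_eq_bot, hgbot]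
    have h2 : g x ⊔ g (xᶜ) = ⊤ := by
      rw [← hgsup x hx (xᶜ) (hBcompl x hx), sup_compl_eq_top, hgtop]
    have h3 : IsCompl (g x) (g (xᶜ)) := ⟨disjoint_iff.mpr h1, codisjoint_iff.mpr h2⟩
    exact h3.compl_eq.symm
  -- cardinalities of fibers agree
  have hEq : ∀ a : A, IsAtom a →
      (atomsB (Bcl a)).card = (atomsB (g (Bcl a))).card :=
    fun a ha => (hcardeq _ _ (hgmeas _ (hBclB a))).symm
  -- the permutation of atoms
  set σ : A → A := fun a =>
    if h : IsAtom a then pickFn (atomsB (Bcl a)) (atomsB (g (Bcl a))) a else a with hσ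
  have hσmem : ∀ a : A, (ha : IsAtom a) → σ a ∈ atomsB (g (Bcl a)) := by
    intro a ha
    rw [hσ]
    simp only [dif_pos ha]
    exact pickFn_mem (hEq a ha) (mem_atomsB.mpr ⟨ha, hleBcl a⟩)
  have hσatom : ∀ a : A, IsAtom a → IsAtom (σ a) := fun a ha =>
    (mem_atomsB.mp (hσmem a ha)).1
  have hσle : ∀ a : A, IsAtom a → σ a ≤ g (Bcl a) := fun a ha =>
    (mem_atomsB.mp (hσmem a ha)).2
  have hσinj : ∀ a a' : A, IsAtom a → IsAtom a' → σ a = σ a' → a = a' := by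
    intro a a' ha ha' heq
    have hbb : Bcl a = Bcl a' := by
      by_contra hnee
      have hd : g (Bcl a) ⊓ g (Bcl a') = ⊥ := by
        rw [← hginf _ (hBclB a) _ (hBclB a'), hBcl_disj a a' ha ha' hnee, hgbot]
      have h1 : σ a ≤ g (Bcl a) ⊓ g (Bcl a') :=
        le_inf (hσle a ha) (heq ▸ hσle a' ha')
      rw [hd] at h1
      exact (hσatom a ha).1 (le_bot_iff.mp h1)
    have h2 : pickFn (atomsB (Bcl a)) (atomsB (g (Bcl a))) a
        = pickFn (atomsB (Bcl a)) (atomsB (g (Bcl a))) a' := by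
      have e1 : σ a = pickFn (atomsB (Bcl a)) (atomsB (g (Bcl a))) a := by
        rw [hσ]; simp only [dif_pos ha]
      have e2 : σ a' = pickFn (atomsB (Bcl a')) (atomsB (g (Bcl a'))) a' := by
        rw [hσ]; simp only [dif_pos ha']
      rw [← e1, heq, e2, hbb]
    exact pickFn_injOn (hEq a ha) (mem_atomsB.mpr ⟨ha, hleBcl a⟩)
      (mem_atomsB.mpr ⟨ha', hbb ▸ hleBcl a'⟩) h2
  -- upgrade to an equivalence of the (finite) type of atoms
  set σ' : {a : A // IsAtom a} → {a : A // IsAtom a} :=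
    fun a => ⟨σ a.1, hσatom a.1 a.2⟩ with hσ'
  have hσ'inj : Function.Injective σ' := by
    intro a b hab
    exact Subtype.ext (hσinj a.1 b.1 a.2 b.2 (congrArg Subtype.val hab))
  have hσ'bij : Function.Bijective σ' := Finite.injective_iff_bijective.mp hσ'inj
  set e : {a : A // IsAtom a} ≃ {a : A // IsAtom a} := Equiv.ofBijective σ' hσ'bij with he
  have heapp : ∀ a : {a : A // IsAtom a}, e a = σ' a := fun a => rfl
  set τ : A → A := fun a => if h : IsAtom a then ((e.symm ⟨a, h⟩ : {a : A // IsAtom a}) : A)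
    else a with hτ
  have hτatom : ∀ a : A, IsAtom a → IsAtom (τ a) := by
    intro a ha
    rw [hτ]; simp only [dif_pos ha]
    exact (e.symm ⟨a, ha⟩).2
  have hτσ : ∀ a : A, IsAtom a → τ (σ a) = a := by
    intro a ha
    have hσa := hσatom a ha
    rw [hτ]; simp only [dif_pos hσa]
    have h1 : (⟨σ a, hσa⟩ : {a : A // IsAtom a}) = e ⟨a, ha⟩ := by
      rw [heapp]
    rw [h1, Equiv.symm_apply_apply]
  have hστ : ∀ a : A, IsAtom a → σ (τ a) = a := by
    intro a ha
    have h0 : τ a = ((e.symm ⟨a, ha⟩ : {a : A // IsAtom a}) : A) := by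
      rw [hτ]; simp only [dif_pos ha]
    have h1 : σ (τ a) = (σ' (e.symm ⟨a, ha⟩) : A) := by rw [h0, hσ']
    rw [h1, ← heapp, Equiv.apply_symm_apply]
  -- the extension and its inverse
  set F : A → A := fun x => (atomsB x).sup σ with hF
  set G : A → A := fun x => (atomsB x).sup τ with hG
  have hFatoms : ∀ x : A, atomsB (F x) = (atomsB x).image σ := fun x =>
    atomsB_sup fun a ha => hσatom a (mem_atomsB.mp ha).1
  have hGatoms : ∀ x : A, atomsB (G x) = (atomsB x).image τ := fun x =>
    atomsB_sup fun a ha => hτatom a (mem_atomsB.mp ha).1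
  have hGF : ∀ x : A, G (F x) = x := by
    intro x
    show (atomsB (F x)).sup τ = x
    rw [hFatoms x, Finset.sup_image]
    calc (atomsB x).sup (τ ∘ σ) = (atomsB x).sup id :=
          Finset.sup_congr rfl fun a ha => hτσ a (mem_atomsB.mp ha).1
      _ = x := sup_atomsB x
  have hFG : ∀ x : A, F (G x) = x := by
    intro x
    show (atomsB (G x)).sup σ = x
    rw [hGatoms x, Finset.sup_image]
    calc (atomsB x).sup (σ ∘ τ) = (atomsB x).sup id :=
          Finset.sup_congr rfl fun a ha => hστ a (mem_atomsB.mp ha).1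
      _ = x := sup_atomsB x
  have hFmono : ∀ x y : A, x ≤ y → F x ≤ F y := by
    intro x y hxy
    exact Finset.sup_mono fun a ha =>
      mem_atomsB.mpr ⟨(mem_atomsB.mp ha).1, (mem_atomsB.mp ha).2.trans hxy⟩
  have hGmono : ∀ x y : A, x ≤ y → G x ≤ G y := by
    intro x y hxy
    exact Finset.sup_mono fun a ha =>
      mem_atomsB.mpr ⟨(mem_atomsB.mp ha).1, (mem_atomsB.mp ha).2.trans hxy⟩
  refine ⟨⟨⟨F, G, hGF, hFG⟩, ?_⟩, ?_, ?_⟩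
  · intro x y
    simp only [Equiv.coe_fn_mk]
    constructor
    · intro hle
      have := hGmono _ _ hle
      rwa [hGF, hGF] at this
    · exact hFmono x y
  · -- measure preserving
    intro x
    simp only [Equiv.coe_fn_mk, RelIso.coe_fn_mk]
    rw [hmeascard (F x), hmeascard x, hFatoms x,
      Finset.card_image_of_injOn fun a ha b hb hab =>
        hσinj a b (mem_atomsB.mp ha).1 (mem_atomsB.mp hb).1 hab]
  · -- extends g
    intro x hx
    simp only [Equiv.coe_fn_mk, RelIso.coe_fn_mk]
    have himg : (atomsB x).image σ = atomsB (g x) := by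
      ext cc
      constructor
      · intro hcc
        obtain ⟨a, ha, rfl⟩ := Finset.mem_image.mp hcc
        obtain ⟨haAtom, hax⟩ := mem_atomsB.mp ha
        refine mem_atomsB.mpr ⟨hσatom a haAtom, ?_⟩
        exact (hσle a haAtom).trans (hgmono _ (hBclB a) _ hx (hBcl_le a x hx hax))
      · intro hcc
        obtain ⟨hcAtom, hcle⟩ := mem_atomsB.mp hcc
        refine Finset.mem_image.mpr ⟨τ cc, ?_, hστ cc hcAtom⟩
        have haAtom : IsAtom (τ cc) := hτatom cc hcAtom
        refine mem_atomsB.mpr ⟨haAtom, ?_⟩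
        have hsplit : τ cc ≤ x ∨ τ cc ≤ xᶜ :=
          (s4_atom_le_sup haAtom).mp (by rw [sup_compl_eq_top]; exact le_top)
        rcases hsplit with h | h
        · exact h
        · exfalso
          have h1 : Bcl (τ cc) ≤ xᶜ := hBcl_le _ _ (hBcompl x hx) h
          have h2 : g (Bcl (τ cc)) ≤ g (xᶜ) :=
            hgmono _ (hBclB _) _ (hBcompl x hx) h1
          have h3 : σ (τ cc) ≤ (g x)ᶜ := by
            rw [← hgcompl x hx]
            exact (hσle _ haAtom).trans h2
          rw [hστ cc hcAtom] at h3
          have h4 : cc ≤ g x ⊓ (g x)ᶜ := le_inf hcle h3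
          rw [inf_compl_eq_bot] at h4
          exact hcAtom.1 (le_bot_iff.mp h4)
    calc F x = (atomsB (F x)).sup id := (sup_atomsB _).symm
      _ = (atomsB (g x)).sup id := by rw [hFatoms x, himg]
      _ = g x := sup_atomsB _
end

section
/- Let A ⊆ B be finite metric spaces with rational distances, f an isometry of A, and g an isometry of B leaving A invariant with g restricted to A equal to f^n for some n ≥ 1. Then there exist a finite rational metric space D containing B and an isometry h of D extending f such that h^n leaves B invariant and h^n restricted to B equals g. -/
/-!
Glue `n` copies of `B` along `A`, the point `a` of `A` lying in copy `i` as `f⁻ⁱ a`, and let the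
distance between points of different copies be the length of the shortest path through a glued
point. Because every `f⁻ⁱ` is an isometry of `A`, this is a pseudometric, and its distances are
sums of distances of `B`, hence rational. Moving copy `i` to copy `i + 1` by the identity and the
last copy to the first by `g` is an isometry of the amalgam since `g = fⁿ` on `A`; it acts as `f`
on the glued copy of `A`, and its `n`-th power acts as `g` on copy `0`. The metric quotient of
the amalgam is the required space.
-/

open Function SeparationQuotient

theorem Isometry.iterate {α : Type*} [PseudoEMetricSpace α] {f : α → α} (hf : Isometry f) :
    ∀ n, Isometry f^[n]
  | 0 => isometry_id
  | n + 1 => (hf.iterate n).comp hf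

instance {X : Type*} [TopologicalSpace X] [Finite X] : Finite (SeparationQuotient X) :=
  .of_surjective _ surjective_mk

noncomputable def IsometryEquiv.separationQuotientCongr {X Y : Type*} [PseudoMetricSpace X]
    [PseudoMetricSpace Y] (φ : X ≃ᵢ Y) : SeparationQuotient X ≃ᵢ SeparationQuotient Y where
  toFun := map φ
  invFun := map φ.symm
  left_inv := surjective_mk.forall.2 fun x => by
    simp [map_mk φ.isometry.uniformContinuous, map_mk φ.symm.isometry.uniformContinuous]
  right_inv := surjective_mk.forall.2 fun y => by
    simp [map_mk φ.isometry.uniformContinuous, map_mk φ.symm.isometry.uniformContinuous]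
  isometry_toFun := Isometry.of_dist_eq <| surjective_mk.forall₂.2 fun x y => by
    simp [map_mk φ.isometry.uniformContinuous, dist_mk, φ.dist_eq]

@[simp]
theorem IsometryEquiv.separationQuotientCongr_mk {X Y : Type*} [PseudoMetricSpace X]
    [PseudoMetricSpace Y] (φ : X ≃ᵢ Y) (x : X) :
    φ.separationQuotientCongr (SeparationQuotient.mk x) = SeparationQuotient.mk (φ x) :=
  map_mk φ.isometry.uniformContinuous x

theorem Finite.exists_isometryEquiv_fin (X : Type*) [MetricSpace X] [Finite X] :
    ∃ (k : ℕ) (_ : MetricSpace (Fin k)), Nonempty (X ≃ᵢ Fin k) := by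
  obtain ⟨k, ⟨φ⟩⟩ := Finite.exists_equiv_fin X
  let _ : MetricSpace (Fin k) := .induced φ.symm φ.symm.injective inferInstance
  refine ⟨k, ‹_›, ⟨{ toEquiv := φ, isometry_toFun := .of_dist_eq fun x y => ?_ }⟩⟩
  show dist (φ.symm (φ x)) (φ.symm (φ y)) = dist x y
  simp

/-- `cap` bounds the distances of `B`; it is the distance between different copies when `A` is
empty, where there is no glued point to pass through. -/
structure AmalgamData (I A B : Type*) [PseudoMetricSpace A] [PseudoMetricSpace B] where
  embed : I → A → B
  isometry_embed : ∀ i, Isometry (embed i)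
  cap : ℝ
  dist_le_cap : ∀ x y : B, dist x y ≤ cap

namespace AmalgamData

variable {I A B : Type*} [PseudoMetricSpace A] [PseudoMetricSpace B] (S : AmalgamData I A B)

noncomputable def crossDist (i j : I) (x y : B) : ℝ :=
  ⨅ o : Option A, o.elim S.cap fun a => dist x (S.embed i a) + dist (S.embed j a) y

theorem crossDist_nonneg (i j : I) (x y : B) : 0 ≤ S.crossDist i j x y :=
  le_ciInf fun o => o.rec (dist_nonneg.trans (S.dist_le_cap x x)) fun _ =>
    add_nonneg dist_nonneg dist_nonneg

theorem crossDist_comm (i j : I) (x y : B) : S.crossDist i j x y = S.crossDist j i y x := by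
  refine iInf_congr fun o => o.rec rfl fun a => ?_
  simp only [Option.elim, dist_comm, add_comm]

theorem dist_le_crossDist_self (i : I) (x y : B) : dist x y ≤ S.crossDist i i x y :=
  le_ciInf fun o => o.rec (S.dist_le_cap x y) fun _ => dist_triangle _ _ _

theorem crossDist_shear (π : I ≃ I) (γ : I → B ≃ B) (hγ : ∀ i, Isometry (γ i)) (τ : A ≃ A)
    (hγτ : ∀ i a, γ i (S.embed i a) = S.embed (π i) (τ a)) (i j : I) (x y : B) :
    S.crossDist (π i) (π j) (γ i x) (γ j y) = S.crossDist i j x y := by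
  refine ((Equiv.optionCongr τ).iInf_congr fun o => o.rec rfl fun a => ?_).symm
  simp [← hγτ, (hγ i).dist_eq, (hγ j).dist_eq]

section Finite

variable [Finite A]

theorem crossDist_le_cap (i j : I) (x y : B) : S.crossDist i j x y ≤ S.cap :=
  ciInf_le (Finite.bddBelow_range _) none

theorem crossDist_le_dist_add (i j : I) (x y : B) (a : A) :
    S.crossDist i j x y ≤ dist x (S.embed i a) + dist (S.embed j a) y :=
  ciInf_le (Finite.bddBelow_range _) (some a)

theorem exists_elim_eq_crossDist (i j : I) (x y : B) :
    ∃ o : Option A,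
      o.elim S.cap (fun a => dist x (S.embed i a) + dist (S.embed j a) y) = S.crossDist i j x y :=
  exists_eq_ciInf_of_finite

theorem crossDist_le_dist_add_crossDist (i k : I) (x y z : B) :
    S.crossDist i k x z ≤ dist x y + S.crossDist i k y z := by
  obtain ⟨_ | a, ho⟩ := S.exists_elim_eq_crossDist i k y z <;> rw [← ho]
  · exact (S.crossDist_le_cap i k x z).trans (le_add_of_nonneg_left dist_nonneg)
  · calc S.crossDist i k x z ≤ dist x (S.embed i a) + dist (S.embed k a) z :=
          S.crossDist_le_dist_add i k x z a
      _ ≤ dist x y + (dist y (S.embed i a) + dist (S.embed k a) z) := by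
          linarith [dist_triangle x y (S.embed i a)]

theorem crossDist_triangle (i j k : I) (x y z : B) :
    S.crossDist i k x z ≤ S.crossDist i j x y + S.crossDist j k y z := by
  obtain ⟨_ | a, h₁⟩ := S.exists_elim_eq_crossDist i j x y
  · rw [← h₁]
    exact (S.crossDist_le_cap i k x z).trans (le_add_of_nonneg_right (S.crossDist_nonneg _ _ _ _))
  obtain ⟨_ | b, h₂⟩ := S.exists_elim_eq_crossDist j k y z
  · rw [← h₂]
    exact (S.crossDist_le_cap i k x z).trans (le_add_of_nonneg_left (S.crossDist_nonneg _ _ _ _))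
  rw [← h₁, ← h₂]
  -- pass from copy `k` to copy `j` between the glued points `a` and `b`
  have hab : dist (S.embed k a) (S.embed k b) = dist (S.embed j a) (S.embed j b) := by
    rw [(S.isometry_embed k).dist_eq, (S.isometry_embed j).dist_eq]
  calc S.crossDist i k x z ≤ dist x (S.embed i a) + dist (S.embed k a) z :=
        S.crossDist_le_dist_add i k x z a
    _ ≤ dist x (S.embed i a) + (dist (S.embed k a) (S.embed k b) + dist (S.embed k b) z) := by
        linarith [dist_triangle (S.embed k a) (S.embed k b) z]
    _ ≤ _ := by
        simp only [Option.elim]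
        linarith [dist_triangle (S.embed j a) y (S.embed j b), dist_comm y (S.embed j b)]

end Finite

section Amalgam

variable [DecidableEq I]

noncomputable def amalgamDist (p q : I × B) : ℝ :=
  if p.1 = q.1 then dist p.2 q.2 else S.crossDist p.1 q.1 p.2 q.2

theorem amalgamDist_same (i : I) (x y : B) : S.amalgamDist (i, x) (i, y) = dist x y :=
  if_pos rfl

theorem amalgamDist_of_ne {i j : I} (h : i ≠ j) (x y : B) :
    S.amalgamDist (i, x) (j, y) = S.crossDist i j x y :=
  if_neg h

theorem amalgamDist_comm (p q : I × B) : S.amalgamDist p q = S.amalgamDist q p := by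
  obtain ⟨i, x⟩ := p
  obtain ⟨j, y⟩ := q
  by_cases h : i = j
  · subst h
    simp only [amalgamDist_same, dist_comm]
  · rw [S.amalgamDist_of_ne h, S.amalgamDist_of_ne (Ne.symm h), crossDist_comm]

theorem amalgamDist_le_crossDist (p q : I × B) :
    S.amalgamDist p q ≤ S.crossDist p.1 q.1 p.2 q.2 := by
  unfold amalgamDist
  split_ifs with h
  · exact h ▸ S.dist_le_crossDist_self p.1 p.2 q.2
  · exact le_rfl

theorem amalgamDist_prodShear (π : I ≃ I) (γ : I → B ≃ B) (hγ : ∀ i, Isometry (γ i))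
    (τ : A ≃ A) (hγτ : ∀ i a, γ i (S.embed i a) = S.embed (π i) (τ a)) (p q : I × B) :
    S.amalgamDist (π.prodShear γ p) (π.prodShear γ q) = S.amalgamDist p q := by
  simp only [amalgamDist, Equiv.prodShear_apply, π.injective.eq_iff]
  split_ifs with h
  · exact h ▸ (hγ p.1).dist_eq _ _
  · exact S.crossDist_shear π γ hγ τ hγτ _ _ _ _

variable [Finite A]

theorem amalgamDist_le_dist_add (i : I) (x y : B) (r : I × B) :
    S.amalgamDist (i, x) r ≤ dist x y + S.amalgamDist (i, y) r := by
  unfold amalgamDist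
  split_ifs
  · exact dist_triangle x y r.2
  · exact S.crossDist_le_dist_add_crossDist i r.1 x y r.2

theorem amalgamDist_triangle (p q r : I × B) :
    S.amalgamDist p r ≤ S.amalgamDist p q + S.amalgamDist q r := by
  obtain ⟨i, x⟩ := p
  obtain ⟨j, y⟩ := q
  obtain ⟨k, z⟩ := r
  by_cases hij : i = j
  · subst hij
    rw [amalgamDist_same]
    exact S.amalgamDist_le_dist_add i x y (k, z)
  by_cases hjk : j = k
  · subst hjk
    rw [amalgamDist_same, S.amalgamDist_comm (i, x), S.amalgamDist_comm (i, x), add_comm,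
      dist_comm]
    exact S.amalgamDist_le_dist_add j z y (i, x)
  calc S.amalgamDist (i, x) (k, z) ≤ S.crossDist i k x z := S.amalgamDist_le_crossDist _ _
    _ ≤ S.crossDist i j x y + S.crossDist j k y z := S.crossDist_triangle i j k x y z
    _ = _ := by rw [S.amalgamDist_of_ne hij, S.amalgamDist_of_ne hjk]

theorem amalgamDist_embed (i j : I) (a : A) :
    S.amalgamDist (i, S.embed i a) (j, S.embed j a) = 0 := by
  by_cases h : i = j
  · subst h
    rw [amalgamDist_same, dist_self]
  · rw [S.amalgamDist_of_ne h]
    refine le_antisymm ?_ (S.crossDist_nonneg _ _ _ _)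
    simpa using S.crossDist_le_dist_add i j (S.embed i a) (S.embed j a) a

theorem amalgamDist_mem (R : AddSubmonoid ℝ) (hB : ∀ x y : B, dist x y ∈ R) (hcap : S.cap ∈ R)
    (p q : I × B) : S.amalgamDist p q ∈ R := by
  unfold amalgamDist
  split_ifs
  · exact hB _ _
  · obtain ⟨_ | a, ho⟩ := S.exists_elim_eq_crossDist p.1 q.1 p.2 q.2 <;> rw [← ho]
    exacts [hcap, add_mem (hB _ _) (hB _ _)]

def Amalgam (_ : AmalgamData I A B) : Type _ := I × B

noncomputable instance : PseudoMetricSpace S.Amalgam where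
  dist := S.amalgamDist
  dist_self p := by simp [amalgamDist]
  dist_comm := S.amalgamDist_comm
  dist_triangle := S.amalgamDist_triangle

instance [Finite I] [Finite B] : Finite S.Amalgam := inferInstanceAs (Finite (I × B))

def inCopy (i : I) (x : B) : S.Amalgam := (i, x)

theorem isometry_mk_inCopy (i : I) :
    Isometry fun x => SeparationQuotient.mk (S.inCopy i x) :=
  .of_dist_eq fun x y => by
    rw [dist_mk]
    exact S.amalgamDist_same i x y

theorem mk_inCopy_embed (i j : I) (a : A) :
    SeparationQuotient.mk (S.inCopy i (S.embed i a)) =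
      SeparationQuotient.mk (S.inCopy j (S.embed j a)) :=
  mk_eq_mk.2 (Metric.inseparable_iff.2 (S.amalgamDist_embed i j a))

theorem dist_mem (R : AddSubmonoid ℝ) (hB : ∀ x y : B, dist x y ∈ R) (hcap : S.cap ∈ R)
    (u v : SeparationQuotient S.Amalgam) : dist u v ∈ R := by
  obtain ⟨p, rfl⟩ := surjective_mk u
  obtain ⟨q, rfl⟩ := surjective_mk v
  rw [dist_mk]
  exact S.amalgamDist_mem R hB hcap p q

def shear (π : I ≃ I) (γ : I → B ≃ B) (hγ : ∀ i, Isometry (γ i)) (τ : A ≃ A)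
    (hγτ : ∀ i a, γ i (S.embed i a) = S.embed (π i) (τ a)) : S.Amalgam ≃ᵢ S.Amalgam where
  toEquiv := π.prodShear γ
  isometry_toFun := .of_dist_eq (S.amalgamDist_prodShear π γ hγ τ hγτ)

theorem shear_inCopy (π : I ≃ I) (γ : I → B ≃ B) (hγ : ∀ i, Isometry (γ i)) (τ : A ≃ A)
    (hγτ : ∀ i a, γ i (S.embed i a) = S.embed (π i) (τ a)) (i : I) (x : B) :
    S.shear π γ hγ τ hγτ (S.inCopy i x) = S.inCopy (π i) (γ i x) :=
  rfl

end Amalgam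

end AmalgamData

section CyclicAmalgam

def cyclicTwist {B : Type*} (m : ℕ) (g : B ≃ B) (i : Fin (m + 1)) : B ≃ B :=
  if i = Fin.last m then g else Equiv.refl B

theorem isometry_cyclicTwist {B : Type*} [PseudoEMetricSpace B] (m : ℕ) {g : B ≃ B}
    (hg : Isometry g) (i : Fin (m + 1)) : Isometry (cyclicTwist m g i) := by
  unfold cyclicTwist
  split_ifs
  exacts [hg, isometry_id]

noncomputable def cyclicAmalgam {B : Type*} [MetricSpace B] [Fintype B] {A : Set B} {f : A ≃ A}
    (hf : Isometry f) (m : ℕ) : AmalgamData (Fin (m + 1)) A B where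
  embed i a := (f.symm^[i] a : B)
  isometry_embed i := isometry_subtype_coe.comp ((hf.right_inv f.right_inv).iterate i)
  -- a sum of distances of `B`, so that the cap is rational when they are
  cap := ∑ p : B × B, dist p.1 p.2
  dist_le_cap x y :=
    Finset.single_le_sum (f := fun p : B × B => dist p.1 p.2) (fun _ _ => dist_nonneg)
      (Finset.mem_univ (x, y))

variable {B : Type*} [MetricSpace B] [Fintype B] {A : Set B} {f : A ≃ A} (hf : Isometry f)
  (m : ℕ) {g : B ≃ B} (hg : Isometry g) (hgf : ∀ a : A, g a = (f^[m + 1] a : B))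

include hgf in
theorem cyclicTwist_embed (i : Fin (m + 1)) (a : A) :
    cyclicTwist m g i ((cyclicAmalgam hf m).embed i a) =
      (cyclicAmalgam hf m).embed (finRotate _ i) (f a) := by
  by_cases hi : i = Fin.last m
  · subst hi
    have hm : f^[m] (f.symm^[m] a) = a := f.right_inv.iterate m a
    simp [cyclicTwist, cyclicAmalgam, hgf, iterate_succ_apply', hm]
  · simp only [cyclicTwist, cyclicAmalgam, if_neg hi, coe_finRotate_of_ne_last hi,
      iterate_succ_apply, Equiv.symm_apply_apply, Equiv.refl_apply]

noncomputable def cyclicShift (hg : Isometry g) (hgf : ∀ a : A, g a = (f^[m + 1] a : B)) :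
    (cyclicAmalgam hf m).Amalgam ≃ᵢ (cyclicAmalgam hf m).Amalgam :=
  (cyclicAmalgam hf m).shear (finRotate _) (cyclicTwist m g) (isometry_cyclicTwist m hg) f
    (cyclicTwist_embed hf m hgf)

theorem cyclicShift_iterate_inCopy_zero (b : B) :
    (cyclicShift hf m hg hgf)^[m + 1] ((cyclicAmalgam hf m).inCopy 0 b) =
      (cyclicAmalgam hf m).inCopy 0 (g b) := by
  have h : ∀ k (hk : k ≤ m),
      (cyclicShift hf m hg hgf)^[k] ((cyclicAmalgam hf m).inCopy 0 b) =
        (cyclicAmalgam hf m).inCopy ⟨k, by omega⟩ b := by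
    intro k
    induction k with
    | zero => exact fun _ => rfl
    | succ k ih =>
      intro hk
      have hk' : (⟨k, by omega⟩ : Fin (m + 1)) ≠ Fin.last m := Fin.ne_of_val_ne (by simp; omega)
      rw [iterate_succ_apply', ih (by omega), cyclicShift, AmalgamData.shear_inCopy,
        finRotate_of_lt hk, cyclicTwist, if_neg hk']
      rfl
  have hlast : (⟨m, by omega⟩ : Fin (m + 1)) = Fin.last m := rfl
  rw [iterate_succ_apply', h m le_rfl, cyclicShift, AmalgamData.shear_inCopy, finRotate_last',
    cyclicTwist, if_pos hlast]
  rfl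

theorem mk_cyclicShift_inCopy_zero (a : A) :
    SeparationQuotient.mk (cyclicShift hf m hg hgf ((cyclicAmalgam hf m).inCopy 0 a)) =
      SeparationQuotient.mk ((cyclicAmalgam hf m).inCopy 0 (f a)) :=
  (congrArg (fun x => SeparationQuotient.mk ((cyclicAmalgam hf m).inCopy _ x))
    (cyclicTwist_embed hf m hgf 0 a)).trans ((cyclicAmalgam hf m).mk_inCopy_embed _ 0 (f a))

end CyclicAmalgam

theorem stmt10_general {B : Type*} [MetricSpace B] [Fintype B]
    (hQ : ∀ x y : B, ∃ q : ℚ, dist x y = (q : ℝ))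
    (A : Set B) (n : ℕ) (hn : 1 ≤ n)
    (f : A ≃ A) (hf : ∀ x y : A, dist (f x) (f y) = dist x y)
    (g : B ≃ B) (hg : ∀ x y : B, dist (g x) (g y) = dist x y)
    (hgf : ∀ a : A, g (a : B) = ((⇑f)^[n] a : B)) :
    ∃ (D : Type) (_ : MetricSpace D) (_ : Fintype D) (e : B → D) (h : D ≃ D),
      (∀ x y : D, ∃ q : ℚ, dist x y = (q : ℝ)) ∧
      (∀ x y : B, dist (e x) (e y) = dist x y) ∧
      (∀ x y : D, dist (h x) (h y) = dist x y) ∧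
      (∀ a : A, h (e (a : B)) = e ((f a : B))) ∧
      (∀ b : B, (⇑h)^[n] (e b) ∈ Set.range e) ∧
      (∀ b : B, (⇑h)^[n] (e b) = e (g b)) := by
  obtain ⟨m, rfl⟩ : ∃ m, n = m + 1 := ⟨n - 1, by omega⟩
  have hf' : Isometry f := .of_dist_eq hf
  have hg' : Isometry g := .of_dist_eq hg
  let S := cyclicAmalgam hf' m
  obtain ⟨k, _, ⟨ψ⟩⟩ := Finite.exists_isometryEquiv_fin (SeparationQuotient S.Amalgam)
  let e : B → Fin k := fun b => ψ (SeparationQuotient.mk (S.inCopy 0 b))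
  let h : Fin k ≃ᵢ Fin k :=
    ψ.symm.trans ((cyclicShift hf' m hg' hgf).separationQuotientCongr.trans ψ)
  have hψ : Semiconj (fun p => ψ (SeparationQuotient.mk p)) (cyclicShift hf' m hg' hgf) h :=
    fun p => by simp [h]
  have h_iterate (b : B) : h^[m + 1] (e b) = e (g b) :=
    (hψ.iterate_right _ _).symm.trans
      (congrArg (fun p => ψ (SeparationQuotient.mk p))
        (cyclicShift_iterate_inCopy_zero hf' m hg' hgf b))
  let R : AddSubmonoid ℝ := (Rat.castHom ℝ).rangeS.toAddSubmonoid
  have hR (x : ℝ) : x ∈ R ↔ ∃ q : ℚ, x = q := by simp [R, eq_comm]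
  have hRB (x y : B) : dist x y ∈ R := (hR _).2 (hQ x y)
  refine ⟨Fin k, _, inferInstance, e, h.toEquiv, ?_, fun x y => ?_, h.dist_eq, fun a => ?_,
    fun b => ⟨g b, (h_iterate b).symm⟩, h_iterate⟩
  · refine ψ.surjective.forall₂.2 fun u v => (hR _).1 ?_
    rw [ψ.dist_eq]
    exact S.dist_mem R hRB (sum_mem fun p _ => hRB p.1 p.2) u v
  · exact (ψ.dist_eq _ _).trans ((S.isometry_mk_inCopy 0).dist_eq x y)
  · exact (hψ _).symm.trans (congrArg ψ (mk_cyclicShift_inCopy_zero hf' m hg' hgf a))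

/-- Let `A ⊆ B` be finite metric spaces with rational distances, `f` an isometry of `A`, and
`g` an isometry of `B` leaving `A` invariant with `g` restricted to `A` equal to `f ^ n` for
some `n ≥ 1`. Then there are a finite rational metric space `D` containing `B` (via an
isometric embedding `e`) and an isometry `h` of `D` extending `f` such that `h ^ n` leaves
`B` invariant and `h ^ n` restricted to `B` equals `g`. -/
theorem stmt10 {B : Type*} [MetricSpace B] [Fintype B]
    (hQ : ∀ x y : B, ∃ q : ℚ, dist x y = (q : ℝ))
    (A : Set B) (n : ℕ) (hn : 1 ≤ n)
    (f : A ≃ A) (hf : ∀ x y : A, dist (f x) (f y) = dist x y)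
    (g : B ≃ B) (hg : ∀ x y : B, dist (g x) (g y) = dist x y)
    (hgA : ∀ a ∈ A, g a ∈ A)
    (hgf : ∀ a : A, g (a : B) = ((⇑f)^[n] a : B)) :
    ∃ (D : Type) (_ : MetricSpace D) (_ : Fintype D) (e : B → D) (h : D ≃ D),
      (∀ x y : D, ∃ q : ℚ, dist x y = (q : ℝ)) ∧
      (∀ x y : B, dist (e x) (e y) = dist x y) ∧
      (∀ x y : D, dist (h x) (h y) = dist x y) ∧
      (∀ a : A, h (e (a : B)) = e ((f a : B))) ∧
      (∀ b : B, (⇑h)^[n] (e b) ∈ Set.range e) ∧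
      (∀ b : B, (⇑h)^[n] (e b) = e (g b)) :=
  stmt10_general hQ A n hn f hf g hg hgf
end

section
/- Let H be a Polish group and n ≥ 1. Suppose there is a comeagre-many-roots transfer setup: H contains a dense subset C (the image in H of a comeagre conjugacy class of a densely embedded Polish group G) such that the n-th power map on C is continuous, open and surjective onto C in the topology of C, and images under the H-power map of nonmeagre-in-C open sets are nonmeagre in H. Then the set of elements of H possessing an n-th root is comeagre in H. -/
/-!
Write `f` for the `n`-th power map. Since `f` maps `C` openly onto the dense set `C`, the image
`f '' (C ∩ B)` of every open `B` is relatively open in a dense set, hence contained in the interior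
of its own closure. This near-openness, together with the continuity of `f` on the complete space
`H`, is all that the Baire-category argument of the Banach open mapping theorem needs: for a
generic `y` there are nested balls `B_k` of radius at most `2⁻ᵏ` such that `y` lies in the interior
of the closure of `f '' (C ∩ B_k)` for every `k`, and then the common limit point `x` of the balls
satisfies `f x = y` by continuity.
-/

open Set Filter Topology Metric TopologicalSpace

theorem eq_of_forall_mem_closure_image {X Y : Type*} [TopologicalSpace X] [TopologicalSpace Y]
    [T2Space Y] {f : X → Y} {x : X} {y : Y} (hf : ContinuousAt f x)
    (h : ∀ s ∈ 𝓝 x, y ∈ closure (f '' s)) : f x = y := by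
  by_contra hne
  obtain ⟨U, V, hU, hV, hxU, hyV, hUV⟩ := t2_separation hne
  obtain ⟨_, hV', z, hzU, rfl⟩ := mem_closure_iff.1 (h _ (hf (hU.mem_nhds hxU))) V hV hyV
  exact disjoint_left.1 hUV hzU hV'

theorem Dense.inter_isOpen_subset_interior_closure {Y : Type*} [TopologicalSpace Y] {D U : Set Y}
    (hD : Dense D) (hU : IsOpen U) : D ∩ U ⊆ interior (closure (D ∩ U)) :=
  inter_subset_right.trans <|
    hU.subset_interior_iff.2 (inter_comm U D ▸ hD.open_subset_closure_inter hU)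

theorem exists_isOpen_inter_eq_image_of_isOpenMap_restrict {X Y : Type*} [TopologicalSpace X]
    [TopologicalSpace Y] {f : X → Y} {A : Set X} {D : Set Y} (hmaps : MapsTo f A D)
    (hopen : IsOpenMap (hmaps.restrict f A D)) {B : Set X} (hB : IsOpen B) :
    ∃ U, IsOpen U ∧ D ∩ U = f '' (A ∩ B) := by
  obtain ⟨U, hU, hUB⟩ := isOpen_induced_iff.1 (hopen _ (hB.preimage continuous_subtype_val))
  refine ⟨U, hU, ?_⟩
  rw [← Subtype.image_preimage_coe, hUB, image_image, ← Subtype.image_preimage_coe A B,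
    image_image]
  simp only [MapsTo.val_restrict_apply]

theorem exists_forall_ball_subset_of_antitone {X : Type*} [PseudoMetricSpace X] [CompleteSpace X]
    {c : ℕ → X} {r : ℕ → ℝ} (hr₀ : ∀ k, 0 < r k) (hr : Tendsto r atTop (𝓝 0))
    (hanti : Antitone fun k => ball (c k) (r k)) : ∃ x, ∀ s ∈ 𝓝 x, ∃ k, ball (c k) (r k) ⊆ s := by
  have hc : ∀ k n, k ≤ n → c n ∈ ball (c k) (r k) := fun k n hkn =>
    hanti hkn (mem_ball_self (hr₀ n))
  have hcauchy : CauchySeq c := Metric.cauchySeq_iff'.2 fun ε hε => by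
    obtain ⟨N, hN⟩ := (hr.eventually (gt_mem_nhds hε)).exists
    exact ⟨N, fun n hn => (hc N n hn).trans hN⟩
  obtain ⟨x, hx⟩ := cauchySeq_tendsto_of_complete hcauchy
  have hxc : ∀ k, dist (c k) x ≤ r k := fun k => by
    rw [dist_comm]
    exact isClosed_closedBall.mem_of_tendsto hx
      (eventually_atTop.2 ⟨k, fun n hn => ball_subset_closedBall (hc k n hn)⟩)
  refine ⟨x, fun s hs => ?_⟩
  obtain ⟨ε, hε, hεs⟩ := Metric.mem_nhds_iff.1 hs
  obtain ⟨k, hk⟩ := (hr.eventually (gt_mem_nhds (half_pos hε))).exists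
  exact ⟨k, (ball_subset_ball' (by linarith [hxc k])).trans hεs⟩

section NearlyOpen

variable {X Y : Type*} [PseudoMetricSpace X] [SeparableSpace X] [Nonempty X] [TopologicalSpace Y]

def denseBall (p : ℕ × ℕ) : Set X := ball (denseSeq X p.1) ((1 / 2) ^ p.2)

theorem exists_denseBall_subset_ball (x : X) {ε : ℝ} (hε : 0 < ε) (k : ℕ) :
    ∃ p : ℕ × ℕ, k ≤ p.2 ∧ x ∈ denseBall p ∧ denseBall p ⊆ ball x ε := by
  obtain ⟨m, hm, hkm⟩ := ((tendsto_pow_atTop_nhds_zero_of_lt_one (by norm_num)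
    (by norm_num : (1 / 2 : ℝ) < 1)).eventually (gt_mem_nhds (half_pos hε))).and
    (eventually_ge_atTop k) |>.exists
  obtain ⟨i, hi⟩ := (denseRange_denseSeq X).exists_dist_lt x (by positivity : (0 : ℝ) < (1 / 2) ^ m)
  refine ⟨(i, m), hkm, mem_ball.2 hi, ball_subset_ball' ?_⟩
  rw [dist_comm]
  linarith

variable (f : X → Y) (A : Set X)

def ballHull (p : ℕ × ℕ) : Set Y := interior (closure (f '' (A ∩ denseBall p)))

variable {f A}

theorem dense_iUnion_ballHull (hA : Dense (f '' A))
    (hnear : ∀ p, f '' (A ∩ denseBall p) ⊆ ballHull f A p) : Dense (⋃ p, ballHull f A p) := by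
  refine hA.mono ?_
  rintro _ ⟨x, hx, rfl⟩
  obtain ⟨p, -, hxp, -⟩ := exists_denseBall_subset_ball x one_pos 0
  exact mem_iUnion.2 ⟨p, hnear p ⟨x, ⟨hx, hxp⟩, rfl⟩⟩

theorem dense_biUnion_ballHull_union_compl_closure
    (hnear : ∀ p, f '' (A ∩ denseBall p) ⊆ ballHull f A p) (j : ℕ × ℕ) (k : ℕ) :
    Dense ((⋃ p ∈ {p | (denseBall p : Set X) ⊆ denseBall j ∧ k ≤ p.2}, ballHull f A p) ∪
      (closure (ballHull f A j))ᶜ) := by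
  refine dense_iff_inter_open.2 fun O hO ⟨o, ho⟩ => ?_
  by_cases hoj : o ∈ closure (ballHull f A j)
  · have : o ∈ closure (f '' (A ∩ denseBall j)) :=
      closure_minimal interior_subset isClosed_closure hoj
    obtain ⟨_, hO', x, ⟨hxA, hxj⟩, rfl⟩ := mem_closure_iff.1 this O hO ho
    obtain ⟨ε, hε, hεj⟩ := Metric.isOpen_iff.1 isOpen_ball x hxj
    obtain ⟨p, hkp, hxp, hpε⟩ := exists_denseBall_subset_ball x hε k
    exact ⟨f x, hO', Or.inl (mem_biUnion ⟨hpε.trans hεj, hkp⟩ (hnear p ⟨x, ⟨hxA, hxp⟩, rfl⟩))⟩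
  · exact ⟨o, ho, Or.inr hoj⟩

theorem mem_range_of_forall_exists_ballHull [CompleteSpace X] [T2Space Y] (hf : Continuous f)
    {y : Y} (h₀ : ∃ p, y ∈ ballHull f A p)
    (hstep : ∀ j, y ∈ ballHull f A j → ∀ k, ∃ p, (denseBall p : Set X) ⊆ denseBall j ∧ k ≤ p.2 ∧
      y ∈ ballHull f A p) : y ∈ range f := by
  choose! next hnext_sub hnext_le hnext_mem using hstep
  obtain ⟨p₀, hp₀⟩ := h₀
  let q : ℕ → ℕ × ℕ := fun k => Nat.rec p₀ (fun k p => next p (k + 1)) k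
  have hq : ∀ k, k ≤ (q k).2 ∧ y ∈ ballHull f A (q k) := fun k => by
    induction k with
    | zero => exact ⟨Nat.zero_le _, hp₀⟩
    | succ k ih => exact ⟨hnext_le _ ih.2 _, hnext_mem _ ih.2 _⟩
  have hanti : Antitone fun k => denseBall (q k) :=
    antitone_nat_of_succ_le fun k => hnext_sub _ (hq k).2 _
  have hr : Tendsto (fun k => (1 / 2 : ℝ) ^ (q k).2) atTop (𝓝 0) :=
    squeeze_zero (fun k => by positivity)
      (fun k => pow_le_pow_of_le_one (by norm_num) (by norm_num) (hq k).1)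
      (tendsto_pow_atTop_nhds_zero_of_lt_one (by norm_num) (by norm_num))
  obtain ⟨x, hx⟩ := exists_forall_ball_subset_of_antitone (fun k => by positivity) hr hanti
  refine ⟨x, eq_of_forall_mem_closure_image hf.continuousAt fun s hs => ?_⟩
  obtain ⟨k, hk⟩ := hx s hs
  exact closure_mono (image_mono (inter_subset_right.trans hk)) (interior_subset (hq k).2)

theorem range_mem_residual_of_image_subset_interior_closure [CompleteSpace X] [T2Space Y]
    (hf : Continuous f) (hA : Dense (f '' A))
    (hnear : ∀ B, IsOpen B → f '' (A ∩ B) ⊆ interior (closure (f '' (A ∩ B)))) :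
    range f ∈ residual Y := by
  have hnear_ball : ∀ p, f '' (A ∩ denseBall p) ⊆ ballHull f A p := fun p => hnear _ isOpen_ball
  have hE := residual_of_dense_open (isOpen_iUnion fun p => isOpen_interior)
    (dense_iUnion_ballHull hA hnear_ball)
  -- a generic `y ∈ ballHull f A j` also lies in `ballHull f A p` for a ball `p ⊆ j` of radius `≤ 2⁻ᵏ`
  have hD := fun j k => residual_of_dense_open
    ((isOpen_biUnion fun _ _ => isOpen_interior).union isClosed_closure.isOpen_compl)
    (dense_biUnion_ballHull_union_compl_closure hnear_ball j k)
  filter_upwards [hE, countable_iInter_mem.2 fun j => countable_iInter_mem.2 (hD j)]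
    with y hy₀ hy
  refine mem_range_of_forall_exists_ballHull hf (mem_iUnion.1 hy₀) fun j hj k => ?_
  rcases mem_iInter.1 (mem_iInter.1 hy j) k with h | h
  · obtain ⟨p, ⟨hpj, hkp⟩, hyp⟩ := mem_iUnion₂.1 h
    exact ⟨p, hpj, hkp, hyp⟩
  · exact absurd (subset_closure hj) h

end NearlyOpen

theorem stmt14_general {H : Type*} [Group H] [TopologicalSpace H] [IsTopologicalGroup H] [PolishSpace H]
    (n : ℕ) (C : Set H) (hd : Dense C)
    (hmaps : Set.MapsTo (fun g : H => g ^ n) C C)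
    (hsurj : Set.SurjOn (fun g : H => g ^ n) C C)
    (hopen : IsOpenMap (Set.MapsTo.restrict (fun g : H => g ^ n) C C hmaps)) :
    {h : H | ∃ r : H, r ^ n = h} ∈ residual H := by
  let _ := upgradeIsCompletelyMetrizable H
  refine range_mem_residual_of_image_subset_interior_closure (continuous_pow n) (A := C)
    (by rwa [hsurj.image_eq_of_mapsTo hmaps]) fun B hB => ?_
  obtain ⟨U, hU, hUB⟩ := exists_isOpen_inter_eq_image_of_isOpenMap_restrict hmaps hopen hB
  exact hUB ▸ hd.inter_isOpen_subset_interior_closure hU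

/-- Transfer of generic `n`-th roots to a Polish group `H`: suppose `H` contains a dense
subset `C` (the image of a comeagre conjugacy class of a densely embedded Polish group) such
that the `n`-th power map on `C` maps `C` onto `C`, is continuous and open in the topology of
`C`, and images under the power map of nonmeagre open subsets of `C` are nonmeagre in `H`.
Then the set of elements of `H` possessing an `n`-th root is comeagre in `H`. -/
theorem stmt14 {H : Type*} [Group H] [TopologicalSpace H] [IsTopologicalGroup H] [PolishSpace H]
    (n : ℕ) (hn : 1 ≤ n) (C : Set H) (hd : Dense C)
    (hmaps : Set.MapsTo (fun g : H => g ^ n) C C)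
    (hsurj : Set.SurjOn (fun g : H => g ^ n) C C)
    (hcont : ContinuousOn (fun g : H => g ^ n) C)
    (hopen : IsOpenMap (Set.MapsTo.restrict (fun g : H => g ^ n) C C hmaps))
    (hnonmeagre : ∀ V : Set C, IsOpen V → ¬ IsMeagre V →
      ¬ IsMeagre ((fun x : C => (x : H) ^ n) '' V)) :
    {h : H | ∃ r : H, r ^ n = h} ∈ residual H :=
  stmt14_general n C hd hmaps hsurj hopen
end

section
/- Let G be a nontrivial Polish group with a countable basis V_0 ⊇ V_1 ⊇ ⋯ of open neighbourhoods of the identity, and let S ⊆ ℕ be infinite. Suppose the set A(S') = {g ∈ G : ∃s ∈ S', g^s = 1} is dense in G for every infinite S' ⊆ S. Then the set C(S) = {g ∈ G : there is a sequence (s_k) in S with g^{s_k} → 1} is a dense G_δ subset of G. -/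
open Filter Topology

/-!
A power sequence `g ^ m` has a subsequence along `S` tending to `1` iff for every `k` some
`m ∈ S` with `m > k` has `g ^ m ∈ V k`. So `C(S) = ⋂ k, B k` with
`B k = {g | ∃ m ∈ S, k < m ∧ g ^ m ∈ V k}`, an open set containing the dense set
`A(S ∩ (k, ∞))`; Baire's theorem concludes.
-/

section Subsequence

variable {X : Type*} [TopologicalSpace X] {x : X} {V : ℕ → Set X}

theorem exists_strictMono_mem_tendsto_iff (hV : Antitone V)
    (hbasis : (𝓝 x).HasBasis (fun _ : ℕ => True) V) (f : ℕ → X) (S : Set ℕ) :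
    (∃ u : ℕ → ℕ, StrictMono u ∧ (∀ k, u k ∈ S) ∧ Tendsto (fun k => f (u k)) atTop (𝓝 x)) ↔
      ∀ k, ∃ m ∈ S, k < m ∧ f m ∈ V k := by
  constructor
  · rintro ⟨u, hu, huS, htend⟩ k
    obtain ⟨N, hN⟩ := eventually_atTop.1 (htend (hbasis.mem_of_mem (i := k) trivial))
    have hk : k < u (max N (k + 1)) :=
      k.lt_succ_self.trans_le ((le_max_right N (k + 1)).trans hu.le_apply)
    exact ⟨_, huS _, hk, hN _ (le_max_left _ _)⟩
  · intro h
    have hfreq : ∀ k, ∃ᶠ m in atTop, m ∈ S ∧ f m ∈ V k := fun k => frequently_atTop.2 fun a => by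
      obtain ⟨m, hmS, hm, hfm⟩ := h (max a k)
      exact ⟨m, (le_max_left a k).trans hm.le, hmS, hV (le_max_right a k) hfm⟩
    obtain ⟨u, hu, hmem⟩ := extraction_forall_of_frequently hfreq
    refine ⟨u, hu, fun k => (hmem k).1, hbasis.tendsto_right_iff.2 fun k _ => ?_⟩
    filter_upwards [eventually_ge_atTop k] with n hn using hV hn (hmem n).2

end Subsequence

theorem isOpen_setOf_exists_pow_mem {M : Type*} [Monoid M] [TopologicalSpace M] [ContinuousMul M]
    {U : Set M} (hU : IsOpen U) (S : Set ℕ) :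
    IsOpen {g : M | ∃ m ∈ S, g ^ m ∈ U} := by
  have hunion : {g : M | ∃ m ∈ S, g ^ m ∈ U} = ⋃ m ∈ S, (· ^ m) ⁻¹' U := by
    ext; simp
  rw [hunion]
  exact isOpen_biUnion fun m _ => hU.preimage (continuous_pow m)

theorem stmt15_general {G : Type*} [Group G] [TopologicalSpace G] [IsTopologicalGroup G] [PolishSpace G]
    (V : ℕ → Set G) (hVopen : ∀ k, IsOpen (V k)) (hV1 : ∀ k, (1 : G) ∈ V k)
    (hdec : ∀ k, V (k + 1) ⊆ V k)
    (hbasis : (𝓝 (1 : G)).HasBasis (fun _ : ℕ => True) V)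
    (S : Set ℕ) (hS : S.Infinite)
    (hA : ∀ S' ⊆ S, S'.Infinite → Dense {g : G | ∃ s ∈ S', g ^ s = 1}) :
    Dense {g : G | ∃ u : ℕ → ℕ, StrictMono u ∧ (∀ k, u k ∈ S) ∧
        Tendsto (fun k => g ^ u k) atTop (𝓝 1)} ∧
    IsGδ {g : G | ∃ u : ℕ → ℕ, StrictMono u ∧ (∀ k, u k ∈ S) ∧
        Tendsto (fun k => g ^ u k) atTop (𝓝 1)} := by
  set B : ℕ → Set G := fun k => {g | ∃ m ∈ {m | m ∈ S ∧ k < m}, g ^ m ∈ V k}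
  have hC : {g : G | ∃ u : ℕ → ℕ, StrictMono u ∧ (∀ k, u k ∈ S) ∧
      Tendsto (fun k => g ^ u k) atTop (𝓝 1)} = ⋂ k, B k := by
    ext g
    simpa [B, and_assoc] using
      exists_strictMono_mem_tendsto_iff (antitone_nat_of_succ_le hdec) hbasis (g ^ ·) S
  have hBopen (k : ℕ) : IsOpen (B k) := isOpen_setOf_exists_pow_mem (hVopen k) _
  have hBdense (k : ℕ) : Dense (B k) := by
    have hinf : {m | m ∈ S ∧ k < m}.Infinite :=
      (hS.sdiff (Set.finite_le_nat k)).mono fun m hm => ⟨hm.1, not_le.1 hm.2⟩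
    refine (hA _ (fun _ hm => hm.1) hinf).mono ?_
    rintro g ⟨m, hm, hgm⟩
    exact ⟨m, hm, hgm ▸ hV1 k⟩
  rw [hC]
  exact ⟨dense_iInter_of_isOpen hBopen hBdense, .iInter fun k => (hBopen k).isGδ⟩

/-- Let `G` be a nontrivial Polish group with a countable decreasing basis `V 0 ⊇ V 1 ⊇ ⋯` of
open neighbourhoods of the identity, and let `S ⊆ ℕ` be infinite. Suppose that for every
infinite `S' ⊆ S` the set `A(S') = {g : ∃ s ∈ S', g ^ s = 1}` is dense in `G`. Then the set
`C(S) = {g : ∃ increasing (s_k) in S, g ^ (s_k) → 1}` is a dense `G_δ` subset of `G`. -/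
theorem stmt15 {G : Type*} [Group G] [TopologicalSpace G] [IsTopologicalGroup G] [PolishSpace G]
    [Nontrivial G]
    (V : ℕ → Set G) (hVopen : ∀ k, IsOpen (V k)) (hV1 : ∀ k, (1 : G) ∈ V k)
    (hdec : ∀ k, V (k + 1) ⊆ V k)
    (hbasis : (𝓝 (1 : G)).HasBasis (fun _ : ℕ => True) V)
    (S : Set ℕ) (hS : S.Infinite)
    (hA : ∀ S' ⊆ S, S'.Infinite → Dense {g : G | ∃ s ∈ S', g ^ s = 1}) :
    Dense {g : G | ∃ u : ℕ → ℕ, StrictMono u ∧ (∀ k, u k ∈ S) ∧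
        Tendsto (fun k => g ^ u k) atTop (𝓝 1)} ∧
    IsGδ {g : G | ∃ u : ℕ → ℕ, StrictMono u ∧ (∀ k, u k ∈ S) ∧
        Tendsto (fun k => g ^ u k) atTop (𝓝 1)} :=
  stmt15_general V hVopen hV1 hdec hbasis S hS hA
end

section
/- Let G be a nontrivial Polish group such that for every infinite S ⊆ ℕ the set {g ∈ G : ∃s ∈ S, g^s = 1} is dense in G. Then every topological similarity class of G is meagre. In particular, every conjugacy class of G is meagre. -/
open Filter Topology

/-- Two elements `f, g` of a topological group are topologically similar if for every
increasing sequence `(s_k)` of natural numbers, `f ^ (s_k) → 1` iff `g ^ (s_k) → 1`. -/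
def TopSimilar {G : Type*} [Group G] [TopologicalSpace G] (f g : G) : Prop :=
  ∀ u : ℕ → ℕ, StrictMono u →
    (Tendsto (fun k => f ^ u k) atTop (𝓝 1) ↔ Tendsto (fun k => g ^ u k) atTop (𝓝 1))

/-! Let `C(S)` be the set of elements some powers of which, with exponents in `S`, tend to `1`.
Each `C(S)` is residual. If a similarity class were not meagre it would meet every `C(S)`, so its
elements `f` would satisfy `f ^ n → 1`, forcing `f = 1`. But the class of `1` is `{1}`, and `1` is
not isolated: otherwise `G` would be discrete, and density for `S = {n | g ^ n ≠ 1}` with `g ≠ 1`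
would give an `s ∈ S` with `g ^ s = 1`. -/

theorem tendsto_atTop_of_forall_infinite_exists_subseq {X : Type*} [TopologicalSpace X]
    {a : ℕ → X} {x : X}
    (h : ∀ S : Set ℕ, S.Infinite → ∃ u : ℕ → ℕ, (∀ k, u k ∈ S) ∧ Tendsto (a ∘ u) atTop (𝓝 x)) :
    Tendsto a atTop (𝓝 x) := by
  intro U hU
  by_contra hnot
  have hS : {n | a n ∉ U}.Infinite :=
    Nat.frequently_atTop_iff_infinite.1 (not_eventually.1 hnot)
  obtain ⟨u, huS, hu⟩ := h _ hS
  obtain ⟨k, hk⟩ := (hu.eventually_mem hU).exists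
  exact huS k hk

section Monoid

variable {M : Type*} [Monoid M] [TopologicalSpace M] [ContinuousMul M]

theorem eq_one_of_tendsto_pow_atTop [T2Space M] {x : M}
    (h : Tendsto (fun n : ℕ => x ^ n) atTop (𝓝 1)) : x = 1 := by
  have hx : Tendsto (fun n : ℕ => x * x ^ n) atTop (𝓝 x) := by
    simpa using h.const_mul x
  simp_rw [← pow_succ'] at hx
  exact tendsto_nhds_unique hx (h.comp (tendsto_add_atTop_nat 1))

theorem eventually_residual_exists_strictMono_tendsto_pow [(𝓝 (1 : M)).IsCountablyGenerated]
    (hdense : ∀ S : Set ℕ, S.Infinite → Dense {g : M | ∃ s ∈ S, g ^ s = 1})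
    {S : Set ℕ} (hS : S.Infinite) :
    ∀ᶠ g in residual M, ∃ u : ℕ → ℕ, StrictMono u ∧ (∀ k, u k ∈ S) ∧
      Tendsto (fun k => g ^ u k) atTop (𝓝 1) := by
  obtain ⟨W, hW1, hW⟩ := (nhds_basis_opens (1 : M)).exists_antitone_subbasis
  have hopen (m n : ℕ) : IsOpen {g : M | ∃ s ≥ n, s ∈ S ∧ g ^ s ∈ W m} := by
    have hunion : {g : M | ∃ s ≥ n, s ∈ S ∧ g ^ s ∈ W m} =
        ⋃ s ∈ {s | n ≤ s ∧ s ∈ S}, (· ^ s) ⁻¹' W m := by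
      ext g
      simp [and_assoc]
    rw [hunion]
    exact isOpen_biUnion fun s _ => (hW1 m).2.preimage (continuous_pow s)
  have hdns (m n : ℕ) : Dense {g : M | ∃ s ≥ n, s ∈ S ∧ g ^ s ∈ W m} := by
    have hSn : {s | s ∈ S ∧ n ≤ s}.Infinite := Nat.frequently_atTop_iff_infinite.1 <|
      (Nat.frequently_atTop_iff_infinite.2 hS).and_eventually (eventually_ge_atTop n)
    refine (hdense _ hSn).mono ?_
    rintro g ⟨s, ⟨hsS, hns⟩, hgs⟩
    exact ⟨s, hns, hsS, hgs ▸ (hW1 m).1⟩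
  have hres : (⋂ m, ⋂ n, {g : M | ∃ s ≥ n, s ∈ S ∧ g ^ s ∈ W m}) ∈ residual M :=
    countable_iInter_mem.2 fun m => countable_iInter_mem.2 fun n =>
      residual_of_dense_open (hopen m n) (hdns m n)
  filter_upwards [hres] with g hg
  simp only [Set.mem_iInter, Set.mem_ofPred_eq] at hg
  obtain ⟨u, hu, hgu⟩ := extraction_forall_of_frequently fun m => frequently_atTop.2 (hg m)
  exact ⟨u, hu, fun k => (hgu k).1, hW.tendsto fun k => (hgu k).2⟩

end Monoid

section Group

variable {G : Type*} [Group G] [TopologicalSpace G] [IsTopologicalGroup G]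

theorem TopSimilar.eq_one [T2Space G] {g : G} (h : TopSimilar 1 g) : g = 1 :=
  eq_one_of_tendsto_pow_atTop <| (h id strictMono_id).1 <| by
    simpa only [one_pow] using tendsto_const_nhds

theorem TopSimilar.of_isConj {f g : G} (h : IsConj f g) : TopSimilar f g := by
  obtain ⟨c, rfl⟩ := isConj_iff.1 h
  intro u _
  have hconj : Topology.IsInducing fun y : G => c * y * c⁻¹ :=
    ((Homeomorph.mulLeft c).trans (Homeomorph.mulRight c⁻¹)).isInducing
  simpa [Function.comp_def, conj_pow] using
    hconj.tendsto_nhds_iff (f := fun k => f ^ u k) (l := atTop) (y := 1)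

theorem not_isOpen_singleton_one [Nontrivial G]
    (hdense : ∀ S : Set ℕ, S.Infinite → Dense {g : G | ∃ s ∈ S, g ^ s = 1}) :
    ¬IsOpen ({1} : Set G) := by
  intro h1
  have := discreteTopology_of_isOpen_singleton_one h1
  obtain ⟨g, hg⟩ := exists_ne (1 : G)
  -- `g ^ (a + 1) = g ^ (a + 2) = 1` would force `g = 1`.
  have hS : {n | g ^ n ≠ 1}.Infinite := Set.infinite_of_forall_exists_gt fun a => by
    by_contra! hle
    have h1 : g ^ (a + 1) = 1 := not_not.1 fun hne => (hle _ hne).not_gt (by omega)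
    have h2 : g ^ (a + 2) = 1 := not_not.1 fun hne => (hle _ hne).not_gt (by omega)
    exact hg (by simpa [pow_succ, h1] using h2)
  have hall := (hdense _ hS).closure_eq
  rw [closure_discrete] at hall
  obtain ⟨s, hs, hgs⟩ := hall.symm ▸ Set.mem_univ g
  exact hs hgs

theorem isMeagre_setOf_topSimilar [T2Space G] [FirstCountableTopology G] [Nontrivial G]
    (hdense : ∀ S : Set ℕ, S.Infinite → Dense {g : G | ∃ s ∈ S, g ^ s = 1}) (f : G) :
    IsMeagre {g : G | TopSimilar f g} := by
  by_contra hM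
  have hf : Tendsto (fun n : ℕ => f ^ n) atTop (𝓝 1) := by
    refine tendsto_atTop_of_forall_infinite_exists_subseq fun S hS => ?_
    have hfreq : ∃ᶠ g in residual G, TopSimilar f g := hM
    obtain ⟨g, hfg, u, hu, huS, hgu⟩ :=
      (hfreq.and_eventually (eventually_residual_exists_strictMono_tendsto_pow hdense hS)).exists
    exact ⟨u, huS, (hfg u hu).2 hgu⟩
  obtain rfl := eq_one_of_tendsto_pow_atTop hf
  refine hM (IsMeagre.mono (fun g hg => TopSimilar.eq_one hg) ?_)
  exact residual_of_dense_open isClosed_singleton.isOpen_compl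
    (dense_compl_singleton_iff_not_open.2 (not_isOpen_singleton_one hdense))

end Group

/-- Let `G` be a nontrivial Polish group such that for every infinite `S ⊆ ℕ` the set
`{g : ∃ s ∈ S, g ^ s = 1}` is dense in `G`. Then every topological similarity class of `G`
is meagre; in particular every conjugacy class of `G` is meagre. -/
theorem stmt16 {G : Type*} [Group G] [TopologicalSpace G] [IsTopologicalGroup G] [PolishSpace G]
    [Nontrivial G]
    (hdense : ∀ S : Set ℕ, S.Infinite → Dense {g : G | ∃ s ∈ S, g ^ s = 1}) :
    (∀ f : G, IsMeagre {g : G | TopSimilar f g}) ∧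
    (∀ f : G, IsMeagre {g : G | IsConj f g}) :=
  ⟨isMeagre_setOf_topSimilar hdense, fun f =>
    (isMeagre_setOf_topSimilar hdense f).mono fun _ => TopSimilar.of_isConj⟩
end

section
/- Let h be an isometry of the Urysohn space U and δ > 0. Then for every finite subset A ⊆ U there is an isometry f of U such that d(f(a), h(a)) ≤ δ for all a ∈ A, while d(a, f(b)) ≥ δ for all a, b ∈ A. -/
/-!
Put `B = A ∪ h[A]` and think of `B × {0, δ}` with the `ℓ¹` metric, in which `B × {0}` is a copy
of `B`. Extending points one at a time, the one-point extension property realises the lifted copy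
`a ↦ (h a, δ)` of `A` by points `g a` of `U`, so that `d(g a, b) = d(h a, b) + δ` for `b ∈ B`.
Then `a ↦ g a` is an isometry between finite subsets of `U`; a back-and-forth argument along a
dense sequence extends it to an isometry between dense subsets, and completeness to an isometry `f`
of `U`. Now `d(f a, h a) = δ` and `d(a, f b) = d(h b, a) + δ ≥ δ`.
-/

/-- The one-point extension property characterising the Urysohn space: every finite subset
`F` together with an admissible assignment of (positive) prospective distances `r` is realised
by an actual point `z`. -/
def IsUrysohn (U : Type*) [MetricSpace U] : Prop :=
  ∀ (F : Finset U) (r : U → ℝ),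
    (∀ x ∈ F, 0 < r x) →
    (∀ x ∈ F, ∀ y ∈ F, |r x - r y| ≤ dist x y ∧ dist x y ≤ r x + r y) →
    ∃ z : U, ∀ x ∈ F, dist z x = r x

open Set Function

theorem exists_seq_of_forall_exists_step {α : Type*} {P : α → Prop} {R : ℕ → α → α → Prop}
    (a : α) (ha : P a) (step : ∀ n x, P x → ∃ y, P y ∧ R n x y) :
    ∃ f : ℕ → α, f 0 = a ∧ ∀ n, P (f n) ∧ R n (f n) (f (n + 1)) := by
  choose! next hnextP hnextR using step
  let f : ℕ → α := fun n => Nat.rec a (fun n x => next n x) n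
  have hf : ∀ n, P (f n) := fun n => by
    induction n with
    | zero => exact ha
    | succ n ih => exact hnextP n _ ih
  exact ⟨f, rfl, fun n => ⟨hf n, hnextR n _ (hf n)⟩⟩

section

variable {U : Type*} [MetricSpace U]

theorem IsUrysohn.exists_dist_eq (hU : IsUrysohn U) {ι : Type*} (s : Finset ι) (x : ι → U)
    (r : ι → ℝ)
    (hr : ∀ i ∈ s, ∀ j ∈ s, |r i - r j| ≤ dist (x i) (x j) ∧ dist (x i) (x j) ≤ r i + r j) :
    ∃ z, ∀ i ∈ s, dist z (x i) = r i := by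
  classical
  have hr₀ : ∀ i ∈ s, 0 ≤ r i := fun i hi => by
    linarith [(hr i hi i hi).2, dist_self (x i)]
  -- `IsUrysohn` only realises positive radii; a zero radius pins the point down to `x i`.
  by_cases hzero : ∃ i ∈ s, r i = 0
  · obtain ⟨i, hi, hri⟩ := hzero
    refine ⟨x i, fun j hj => ?_⟩
    obtain ⟨hlow, hupp⟩ := hr i hi j hj
    rw [hri, zero_sub, abs_neg, abs_of_nonneg (hr₀ j hj)] at hlow
    linarith
  push Not at hzero
  have hfactor : ∀ i ∈ s, ∀ j ∈ s, x i = x j → r i = r j := fun i hi j hj hij => by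
    have := (hr i hi j hj).1
    rw [hij, dist_self] at this
    exact sub_eq_zero.mp (abs_nonpos_iff.mp this)
  let ρ : U → ℝ := fun y => if hy : ∃ i ∈ s, x i = y then r hy.choose else 0
  have hρ : ∀ i ∈ s, ρ (x i) = r i := fun i hi => by
    have hy : ∃ j ∈ s, x j = x i := ⟨i, hi, rfl⟩
    simp only [ρ, dif_pos hy]
    exact hfactor _ hy.choose_spec.1 _ hi hy.choose_spec.2
  obtain ⟨z, hz⟩ := hU (s.image x) ρ
    (Finset.forall_mem_image.2 fun i hi =>
      (hρ i hi).symm ▸ lt_of_le_of_ne (hr₀ i hi) (hzero i hi).symm)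
    (Finset.forall_mem_image.2 fun i hi => Finset.forall_mem_image.2 fun j hj => by
      rw [hρ i hi, hρ j hj]; exact hr i hi j hj)
  exact ⟨z, fun i hi => (hz (x i) (Finset.mem_image_of_mem x hi)).trans (hρ i hi)⟩

theorem IsUrysohn.exists_isometric_lift (hU : IsUrysohn U) {h : U → U} (hh : Isometry h) {δ : ℝ}
    (hδ : 0 ≤ δ) (A B : Finset U) :
    ∃ g : U → U, (∀ a ∈ A, ∀ a' ∈ A, dist (g a) (g a') = dist a a') ∧
      ∀ a ∈ A, ∀ b ∈ B, dist (g a) b = dist (h a) b + δ := by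
  classical
  induction A using Finset.induction_on with
  | empty => exact ⟨id, by simp, by simp⟩
  | insert a A ha ih =>
    obtain ⟨g, hg, hgB⟩ := ih
    obtain ⟨z, hz⟩ := hU.exists_dist_eq (B.disjSum A) (Sum.elim id g)
      (Sum.elim (fun b => dist (h a) b + δ) (fun a' => dist a a')) (by
        rintro (b | a') hi (b' | a'') hj <;>
          simp only [Finset.inl_mem_disjSum, Finset.inr_mem_disjSum] at hi hj <;>
          simp only [Sum.elim_inl, Sum.elim_inr, id] <;>
          rw [abs_sub_le_iff]
        · refine ⟨⟨?_, ?_⟩, ?_⟩ <;>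
            linarith [dist_triangle (h a) b' b, dist_triangle (h a) b b',
              dist_triangle b (h a) b', dist_comm b b', dist_comm (h a) b]
        · refine ⟨⟨?_, ?_⟩, ?_⟩ <;>
            linarith [hgB a'' hj b hi, dist_comm b (g a''), hh.dist_eq a a'',
              dist_comm (h a) (h a''), dist_triangle (h a) (h a'') b,
              dist_triangle_right (h a) (h a'') b, dist_triangle (h a'') (h a) b]
        · refine ⟨⟨?_, ?_⟩, ?_⟩ <;>
            linarith [hgB a' hi b' hj, hh.dist_eq a a', dist_comm (h a) (h a'),
              dist_triangle (h a) (h a') b', dist_triangle_right (h a) (h a') b',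
              dist_triangle (h a') (h a) b']
        · refine ⟨⟨?_, ?_⟩, ?_⟩ <;>
            linarith [hg a' hi a'' hj, dist_triangle a a'' a', dist_triangle a a' a'',
              dist_triangle_left a' a'' a, dist_comm a' a''])
    have hzB : ∀ b ∈ B, dist z b = dist (h a) b + δ := fun b hb =>
      hz (.inl b) (Finset.inl_mem_disjSum.2 hb)
    have hzA : ∀ a' ∈ A, dist z (g a') = dist a a' := fun a' ha' =>
      hz (.inr a') (Finset.inr_mem_disjSum.2 ha')
    have hupd : ∀ x ∈ A, update g a z x = g x := fun x hx =>
      update_of_ne (ne_of_mem_of_not_mem hx ha) _ _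
    refine ⟨update g a z, fun x hx y hy => ?_, fun x hx b hb => ?_⟩
    · rw [Finset.mem_insert] at hx hy
      rcases hx with rfl | hx <;> rcases hy with rfl | hy
      · simp
      · rw [update_self, hupd y hy, hzA y hy]
      · rw [update_self, hupd x hx, dist_comm, hzA x hx, dist_comm]
      · rw [hupd x hx, hupd y hy, hg x hx y hy]
    · obtain rfl | hx := Finset.mem_insert.1 hx
      · rw [update_self, hzB b hb]
      · rw [hupd x hx, hgB x hx b hb]

def IsPartialIsometry (S : Set (U × U)) : Prop :=
  ∀ p ∈ S, ∀ q ∈ S, dist p.1 q.1 = dist p.2 q.2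

namespace IsPartialIsometry

variable {S : Set (U × U)}

theorem snd_eq_of_fst_eq (hS : IsPartialIsometry S) {p q : U × U} (hp : p ∈ S) (hq : q ∈ S)
    (h : p.1 = q.1) : p.2 = q.2 := by
  have := hS p hp q hq
  rwa [h, dist_self, eq_comm, dist_eq_zero] at this

theorem insert (hS : IsPartialIsometry S) {p : U × U}
    (hp : ∀ q ∈ S, dist p.1 q.1 = dist p.2 q.2) : IsPartialIsometry (insert p S) := by
  rintro q (rfl | hq) q' (rfl | hq')
  · simp
  · exact hp q' hq'
  · rw [dist_comm, hp q hq, dist_comm]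
  · exact hS q hq q' hq'

theorem preimage_swap (hS : IsPartialIsometry S) : IsPartialIsometry (Prod.swap ⁻¹' S) :=
  fun _ hp _ hq => (hS _ hp _ hq).symm

theorem iUnion {ι : Type*} {T : ι → Set (U × U)} (hdir : Directed (· ⊆ ·) T)
    (hT : ∀ i, IsPartialIsometry (T i)) : IsPartialIsometry (⋃ i, T i) := by
  intro p hp q hq
  obtain ⟨i, hpi⟩ := mem_iUnion.1 hp
  obtain ⟨j, hqj⟩ := mem_iUnion.1 hq
  obtain ⟨k, hik, hjk⟩ := hdir i j
  exact hT k p (hik hpi) q (hjk hqj)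

theorem exists_isometryEquiv [CompleteSpace U] (hS : IsPartialIsometry S)
    (hfst : Dense (Prod.fst '' S)) (hsnd : Dense (Prod.snd '' S)) :
    ∃ f : U ≃ᵢ U, ∀ p ∈ S, f p.1 = p.2 := by
  have hpair : ∀ x : Prod.fst '' S, ∃ y, ((x : U), y) ∈ S := fun ⟨_, p, hp, hpx⟩ =>
    ⟨p.2, hpx ▸ hp⟩
  choose φ hφS using hpair
  have hφ : Isometry φ := Isometry.of_dist_eq fun x y => (hS _ (hφS x) _ (hφS y)).symm
  have he : IsUniformInducing ((↑) : Prod.fst '' S → U) := isometry_subtype_coe.isUniformInducing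
  set Φ := (he.isDenseInducing hfst.denseRange_val).extend φ
  have hΦφ : ∀ x : Prod.fst '' S, Φ x = φ x :=
    uniformly_extend_of_ind he hfst.denseRange_val hφ.uniformContinuous
  have hΦcont : Continuous Φ :=
    (uniformContinuous_uniformly_extend he hfst.denseRange_val hφ.uniformContinuous).continuous
  have hΦ : Isometry Φ := Isometry.of_dist_eq fun x y =>
    isClosed_property2 hfst.denseRange_val (p := fun x y => dist (Φ x) (Φ y) = dist x y)
      (isClosed_eq (by fun_prop) (by fun_prop))
      (fun x y => by rw [hΦφ, hΦφ]; exact hφ.dist_eq x y) x y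
  have hΦS : ∀ p ∈ S, Φ p.1 = p.2 := fun p hp =>
    (hΦφ ⟨p.1, p, hp, rfl⟩).trans (hS.snd_eq_of_fst_eq (hφS _) hp rfl)
  have hsurj : Surjective Φ := by
    have hdense : Dense (range Φ) :=
      hsnd.mono (by rintro _ ⟨p, hp, rfl⟩; exact ⟨p.1, hΦS p hp⟩)
    rw [← range_eq_univ, ← hΦ.isClosedEmbedding.isClosed_range.closure_eq, hdense.closure_eq]
  exact ⟨{ toEquiv := Equiv.ofBijective Φ ⟨hΦ.injective, hsurj⟩, isometry_toFun := hΦ }, hΦS⟩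

end IsPartialIsometry

namespace IsUrysohn

variable (hU : IsUrysohn U) {S : Set (U × U)}
include hU

theorem exists_dist_eq_of_isPartialIsometry (hS : IsPartialIsometry S) (hfin : S.Finite)
    (u : U) : ∃ z, ∀ q ∈ S, dist u q.1 = dist z q.2 := by
  obtain ⟨z, hz⟩ := hU.exists_dist_eq hfin.toFinset Prod.snd (fun p => dist u p.1)
    fun p hp q hq => by
      simp only [Finite.mem_toFinset] at hp hq
      rw [← hS p hp q hq]
      exact ⟨by simpa only [dist_comm u] using abs_dist_sub_le p.1 q.1 u,
        dist_triangle_left p.1 q.1 u⟩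
  exact ⟨z, fun q hq => (hz q (hfin.mem_toFinset.2 hq)).symm⟩

theorem exists_finite_isPartialIsometry_superset (hS : IsPartialIsometry S) (hfin : S.Finite)
    (u : U) : ∃ T : Set (U × U), T.Finite ∧ IsPartialIsometry T ∧ S ⊆ T ∧
      u ∈ Prod.fst '' T ∧ u ∈ Prod.snd '' T := by
  obtain ⟨z, hz⟩ := hU.exists_dist_eq_of_isPartialIsometry hS hfin u
  have hS' : IsPartialIsometry (insert (u, z) S) := hS.insert hz
  have hfin' : (insert (u, z) S).Finite := hfin.insert _
  obtain ⟨w, hw⟩ := hU.exists_dist_eq_of_isPartialIsometry hS'.preimage_swap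
    (hfin'.preimage Prod.swap_injective.injOn) u
  refine ⟨insert (w, u) (insert (u, z) S), hfin'.insert _,
    hS'.insert fun q hq => (hw q.swap hq).symm, (subset_insert _ _).trans (subset_insert _ _),
    ⟨(u, z), mem_insert_of_mem _ (mem_insert _ _), rfl⟩, ⟨(w, u), mem_insert _ _, rfl⟩⟩

theorem exists_isometryEquiv_of_isPartialIsometry [CompleteSpace U]
    [TopologicalSpace.SeparableSpace U] (hS : IsPartialIsometry S) (hfin : S.Finite) :
    ∃ f : U ≃ᵢ U, ∀ p ∈ S, f p.1 = p.2 := by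
  rcases isEmpty_or_nonempty U with _ | _
  · exact ⟨IsometryEquiv.refl U, fun p _ => isEmptyElim p.1⟩
  obtain ⟨u, hu⟩ := TopologicalSpace.exists_dense_seq U
  obtain ⟨T, hT0, hT⟩ := exists_seq_of_forall_exists_step
    (P := fun T : Set (U × U) => T.Finite ∧ IsPartialIsometry T)
    (R := fun n T T' => T ⊆ T' ∧ u n ∈ Prod.fst '' T' ∧ u n ∈ Prod.snd '' T') S ⟨hfin, hS⟩
    fun n T hT => by
      obtain ⟨T', hfin', hT', hsub, hfst, hsnd⟩ :=
        hU.exists_finite_isPartialIsometry_superset hT.2 hT.1 (u n)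
      exact ⟨T', ⟨hfin', hT'⟩, hsub, hfst, hsnd⟩
  have hmono : Monotone T := monotone_nat_of_le_succ fun n => (hT n).2.1
  have hdense : ∀ π : U × U → U, (∀ n, u n ∈ π '' T (n + 1)) → Dense (π '' ⋃ n, T n) :=
    fun π hπ => hu.mono (range_subset_iff.2 fun n => image_mono (subset_iUnion T (n + 1)) (hπ n))
  have hunion : IsPartialIsometry (⋃ n, T n) :=
    IsPartialIsometry.iUnion hmono.directed_le fun n => (hT n).1.2
  obtain ⟨f, hf⟩ := hunion.exists_isometryEquiv (hdense _ fun n => (hT n).2.2.1)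
    (hdense _ fun n => (hT n).2.2.2)
  exact ⟨f, fun p hp => hf p (mem_iUnion.2 ⟨0, hT0 ▸ hp⟩)⟩

theorem exists_isometryEquiv_eqOn [CompleteSpace U] [TopologicalSpace.SeparableSpace U]
    {s : Set U} (hs : s.Finite) {g : U → U} (hg : ∀ x ∈ s, ∀ y ∈ s, dist (g x) (g y) = dist x y) :
    ∃ f : U ≃ᵢ U, EqOn f g s := by
  obtain ⟨f, hf⟩ := hU.exists_isometryEquiv_of_isPartialIsometry (S := (fun x => (x, g x)) '' s)
    (by rintro _ ⟨x, hx, rfl⟩ _ ⟨y, hy, rfl⟩; exact (hg x hx y hy).symm) (hs.image _)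
  exact ⟨f, fun x hx => hf _ ⟨x, hx, rfl⟩⟩

end IsUrysohn

end

/-- Let `h` be an isometry of the Urysohn space `U` and `δ > 0`. Then for every finite subset
`A ⊆ U` there is an isometry `f` of `U` such that `dist (f a) (h a) ≤ δ` for all `a ∈ A`,
while `dist a (f b) ≥ δ` for all `a, b ∈ A`. -/
theorem stmt17 {U : Type*} [MetricSpace U] [CompleteSpace U]
    [TopologicalSpace.SeparableSpace U] (hU : IsUrysohn U)
    (h : U ≃ᵢ U) (δ : ℝ) (hδ : 0 < δ) (A : Finset U) :
    ∃ f : U ≃ᵢ U, (∀ a ∈ A, dist (f a) (h a) ≤ δ) ∧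
      ∀ a ∈ A, ∀ b ∈ A, δ ≤ dist a (f b) := by
  classical
  obtain ⟨g, hg, hgB⟩ := hU.exists_isometric_lift h.isometry hδ.le A (A ∪ A.image h)
  obtain ⟨f, hf⟩ := hU.exists_isometryEquiv_eqOn A.finite_toSet hg
  refine ⟨f, fun a ha => ?_, fun a ha b hb => ?_⟩
  · rw [hf ha, hgB a ha (h a) (by simp [ha]), dist_self, zero_add]
  · rw [hf hb, dist_comm, hgB b hb a (by simp [ha])]
    linarith [dist_nonneg (x := h b) (y := a)]
end

section
/- In the construction for Rohlin's Lemma for isometries: let A be a finite metric space, f a partial isometry (defined on A with values in a metric space containing A ∪ f[A]) with δ = min{d(x, f(y)) : x, y ∈ A} > 0 and Δ = diam(A ∪ f[A]), and let F be a cyclic order of size s with δ·(s−2) ≥ Δ. Define on B = A × F the weighted-graph metric D induced by edge weights ρ(a•x, b•x) = d(a,b), ρ(a•x, b•x⁺) = d(a, f(b)), ρ(a•x⁻, b•x) = d(f(a), b). Then D(a•x, b•x) = d(a, b) and D(a•x, b•x⁺) = d(a, f(b)) for all a, b ∈ A and x ∈ F, and the map g(a•x) = a•x⁺ is an isometry of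 (B, D) with g^s = identity. -/
/-- The edge weights `ρ` on `B = A × F` (with `F` the cyclic order `ZMod s`):
`ρ(a•x, b•x) = d(a,b)`, `ρ(a•x, b•x⁺) = d(a, f b)`, `ρ(a•x, b•x⁻) = d(f a, b)`. -/
noncomputable def rho {X : Type*} [MetricSpace X] (A : Set X) (f : A → X) (s : ℕ)
    (p q : A × ZMod s) : ℝ :=
  if q.2 = p.2 then dist (p.1 : X) (q.1 : X)
  else if q.2 = p.2 + 1 then dist (p.1 : X) (f q.1)
  else if q.2 = p.2 - 1 then dist (f p.1) (q.1 : X)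
  else 0

/-- Consecutive points of a path may change their `F`-coordinate by at most one step. -/
def stepAdm {X : Type*} (A : Set X) (s : ℕ) (p q : A × ZMod s) : Prop :=
  q.2 = p.2 ∨ q.2 = p.2 + 1 ∨ q.2 = p.2 - 1

/-- The length of a path: the sum of `ρ` over consecutive pairs. -/
noncomputable def pathLen {X : Type*} [MetricSpace X] (A : Set X) (f : A → X) (s : ℕ) :
    List (A × ZMod s) → ℝ
  | [] => 0
  | [_] => 0
  | p :: q :: rest => rho A f s p q + pathLen A f s (q :: rest)

/-- The weighted-graph metric `D` on `B = A × ZMod s`: the infimum of lengths of admissible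
paths connecting two points. -/
noncomputable def graphDist {X : Type*} [MetricSpace X] (A : Set X) (f : A → X) (s : ℕ)
    (p q : A × ZMod s) : ℝ :=
  sInf {r : ℝ | ∃ c : List (A × ZMod s), c.head? = some p ∧ c.getLast? = some q ∧
    List.Chain' (stepAdm A s) c ∧ pathLen A f s c = r}

/-! Lift a path in `B` to the unrolled graph `A × ℤ`; it ends at some level `k`. By induction
along the path, using the triangle inequality and that `f` is an isometry, its length is at least
`liftCost k`, the least length of a monotone path between the lifted endpoints; for `k = 0` this
is `d(a, b)`, and for `k = 1` it is at least `d(a, f b)`. Any other admissible `k` winds around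
`F`, so `|k| ≥ s - 1`, and since each change of level costs at least `δ` the path has length at
least `δ (s - 2) ≥ Δ`. -/

section ChainCost

variable {α : Type*} [PseudoMetricSpace α]

noncomputable def chainCost (w : α → α → ℝ) : ℕ → α → α → ℝ
  | 0 => dist
  | k + 1 => fun c b => ⨅ e, w c e + chainCost w k e b

variable {w : α → α → ℝ}

lemma chainCost_succ_le [Finite α] (k : ℕ) (c e b : α) :
    chainCost w (k + 1) c b ≤ w c e + chainCost w k e b :=
  ciInf_le (Set.finite_range _).bddBelow e

lemma chainCost_le_dist_add [Finite α] (hw : ∀ c c' e, w c e ≤ dist c c' + w c' e)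
    (k : ℕ) (c c' b : α) :
    chainCost w k c b ≤ dist c c' + chainCost w k c' b := by
  cases k with
  | zero => exact dist_triangle c c' b
  | succ k =>
    have : Nonempty α := ⟨c⟩
    obtain ⟨e, he⟩ := exists_eq_ciInf_of_finite (f := fun e => w c' e + chainCost w k e b)
    calc chainCost w (k + 1) c b ≤ w c e + chainCost w k e b := chainCost_succ_le k c e b
      _ ≤ dist c c' + (w c' e + chainCost w k e b) := by linarith [hw c c' e]
      _ = dist c c' + chainCost w (k + 1) c' b := by rw [he]; rfl

lemma chainCost_le_add_succ [Finite α] {v : α → α → ℝ}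
    (hw : ∀ c c' e, w c e ≤ dist c c' + w c' e)
    (hvw : ∀ c c' e, dist c e ≤ v c c' + w c' e) (k : ℕ) (c c' b : α) :
    chainCost w k c b ≤ v c c' + chainCost w (k + 1) c' b := by
  have : Nonempty α := ⟨c⟩
  obtain ⟨e, he⟩ := exists_eq_ciInf_of_finite (f := fun e => w c' e + chainCost w k e b)
  calc chainCost w k c b ≤ dist c e + chainCost w k e b := chainCost_le_dist_add hw k c e b
    _ ≤ v c c' + (w c' e + chainCost w k e b) := by linarith [hvw c c' e]
    _ = v c c' + chainCost w (k + 1) c' b := by rw [he]; rfl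

lemma mul_le_chainCost {δ : ℝ} (hw : ∀ c e, δ ≤ w c e) (k : ℕ) (c b : α) :
    δ * k ≤ chainCost w k c b := by
  induction k generalizing c with
  | zero => simp only [Nat.cast_zero, mul_zero]; exact dist_nonneg
  | succ k ih =>
    have : Nonempty α := ⟨c⟩
    refine le_ciInf fun e => ?_
    push_cast
    linarith [hw c e, ih e]

end ChainCost

section LiftCost

variable {X : Type*} [MetricSpace X] {A : Set X} (f : A → X)

def upCost (c e : A) : ℝ := dist (c : X) (f e)

def downCost (c e : A) : ℝ := dist (f c) (e : X)

/-- `liftCost f k c b` is the least length of a monotone path from `c•0` to `b•k` in the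
unrolled graph `A × ℤ`. -/
noncomputable def liftCost : ℤ → A → A → ℝ
  | Int.ofNat n => chainCost (upCost f) n
  | Int.negSucc n => chainCost (downCost f) (n + 1)

lemma liftCost_zero : liftCost f 0 = dist := rfl

lemma liftCost_natCast (n : ℕ) : liftCost f n = chainCost (upCost f) n := rfl

lemma liftCost_negSucc (n : ℕ) : liftCost f (Int.negSucc n) = chainCost (downCost f) (n + 1) :=
  rfl

lemma liftCost_neg_natCast (n : ℕ) : liftCost f (-n) = chainCost (downCost f) n := by
  cases n <;> rfl

lemma upCost_le_dist_add (c c' e : A) : upCost f c e ≤ dist c c' + upCost f c' e :=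
  dist_triangle _ _ _

lemma dist_le_upCost_add_downCost (c c' e : A) : dist c e ≤ upCost f c c' + downCost f c' e :=
  dist_triangle (c : X) (f c') e

lemma mul_abs_le_liftCost {δ : ℝ} (hδ : ∀ x y : A, δ ≤ dist (x : X) (f y)) (k : ℤ)
    (c b : A) :
    δ * |k| ≤ liftCost f k c b := by
  cases k with
  | ofNat n =>
    rw [Int.ofNat_eq_natCast, liftCost_natCast, abs_of_nonneg (by positivity)]
    exact mul_le_chainCost hδ n c b
  | negSucc n =>
    have h := mul_le_chainCost (w := downCost f) (fun c e => (hδ e c).trans_eq (dist_comm _ _))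
      (n + 1) c b
    rw [liftCost_negSucc, Int.negSucc_eq, abs_neg, abs_of_nonneg (by positivity)]
    exact_mod_cast h

section Isometric

variable {f} (hf : ∀ x y : A, dist (f x) (f y) = dist (x : X) (y : X))
include hf

lemma downCost_le_dist_add (c c' e : A) : downCost f c e ≤ dist c c' + downCost f c' e := by
  rw [Subtype.dist_eq, ← hf]
  exact dist_triangle _ _ _

lemma dist_le_downCost_add_upCost (c c' e : A) :
    dist c e ≤ downCost f c c' + upCost f c' e := by
  rw [Subtype.dist_eq, ← hf]
  exact dist_triangle _ _ _

lemma dist_le_liftCost_one (a b : A) : dist (a : X) (f b) ≤ liftCost f 1 a b := by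
  have : Nonempty A := ⟨a⟩
  refine le_ciInf fun e => ?_
  calc dist (a : X) (f b) ≤ dist (a : X) (f e) + dist (f e) (f b) := dist_triangle _ _ _
    _ = upCost f a e + dist e b := by rw [hf]; rfl

variable [Finite A]

lemma liftCost_le_dist_add (k : ℤ) (c c' b : A) :
    liftCost f k c b ≤ dist c c' + liftCost f k c' b := by
  cases k with
  | ofNat n => exact chainCost_le_dist_add (upCost_le_dist_add f) n c c' b
  | negSucc n => exact chainCost_le_dist_add (downCost_le_dist_add hf) (n + 1) c c' b

lemma liftCost_add_one_le (k : ℤ) (c c' b : A) :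
    liftCost f (k + 1) c b ≤ upCost f c c' + liftCost f k c' b := by
  cases k with
  | ofNat n => exact chainCost_succ_le n c c' b
  | negSucc n =>
    rw [show Int.negSucc n + 1 = -(n : ℤ) by omega, liftCost_neg_natCast, liftCost_negSucc]
    exact chainCost_le_add_succ (downCost_le_dist_add hf) (dist_le_upCost_add_downCost f)
      n c c' b

lemma liftCost_sub_one_le (k : ℤ) (c c' b : A) :
    liftCost f (k - 1) c b ≤ downCost f c c' + liftCost f k c' b := by
  rcases k with (_ | n) | n
  · exact chainCost_succ_le 0 c c' b
  · rw [show Int.ofNat (n + 1) - 1 = n by rw [Int.ofNat_eq_natCast]; omega, liftCost_natCast]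
    exact chainCost_le_add_succ (upCost_le_dist_add f) (dist_le_downCost_add_upCost hf)
      n c c' b
  · rw [show Int.negSucc n - 1 = Int.negSucc (n + 1) by omega, liftCost_negSucc,
      liftCost_negSucc]
    exact chainCost_succ_le (n + 1) c c' b

end Isometric

end LiftCost

lemma natCast_zmod_ne_zero {n s : ℕ} (h0 : 0 < n) (h : n < s) : (n : ZMod s) ≠ 0 := by
  rw [Ne, ZMod.natCast_eq_zero_iff]
  exact Nat.not_dvd_of_pos_of_lt h0 h

section GraphDist

variable {X : Type*} [MetricSpace X] {A : Set X} {f : A → X} {s : ℕ} {p q : A × ZMod s}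

lemma rho_of_eq (h : q.2 = p.2) : rho A f s p q = dist p.1 q.1 := if_pos h

lemma rho_of_eq_add_one (hs : 2 < s) (h : q.2 = p.2 + 1) :
    rho A f s p q = upCost f p.1 q.1 := by
  have h1 : ((1 : ℕ) : ZMod s) ≠ 0 := natCast_zmod_ne_zero one_pos (by omega)
  have hne : q.2 ≠ p.2 := by rw [h]; intro h'; exact h1 (by simpa using h')
  exact (if_neg hne).trans (if_pos h)

lemma rho_of_eq_sub_one (hs : 2 < s) (h : q.2 = p.2 - 1) :
    rho A f s p q = downCost f p.1 q.1 := by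
  have h1 : ((1 : ℕ) : ZMod s) ≠ 0 := natCast_zmod_ne_zero one_pos (by omega)
  have h2 : ((2 : ℕ) : ZMod s) ≠ 0 := natCast_zmod_ne_zero two_pos hs
  have hne : q.2 ≠ p.2 := by
    rw [h]; intro h'; exact h1 (by push_cast; linear_combination -h')
  have hne' : q.2 ≠ p.2 + 1 := by
    rw [h]; intro h'; exact h2 (by push_cast; linear_combination -h')
  exact (if_neg hne).trans ((if_neg hne').trans (if_pos h))

lemma exists_liftCost_le_rho_add (hf : ∀ x y : A, dist (f x) (f y) = dist (x : X) (y : X))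
    [Finite A] (hs : 2 < s) (h : stepAdm A s p q) :
    ∃ j : ℤ, (j : ZMod s) = q.2 - p.2 ∧
      ∀ k b, liftCost f (k + j) p.1 b ≤ rho A f s p q + liftCost f k q.1 b := by
  rcases h with h | h | h
  · refine ⟨0, by simp [h], fun k b => ?_⟩
    rw [add_zero, rho_of_eq h]
    exact liftCost_le_dist_add hf k p.1 q.1 b
  · refine ⟨1, by simp [h], fun k b => ?_⟩
    rw [rho_of_eq_add_one hs h]
    exact liftCost_add_one_le hf k p.1 q.1 b
  · refine ⟨-1, by simp [h], fun k b => ?_⟩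
    rw [← sub_eq_add_neg, rho_of_eq_sub_one hs h]
    exact liftCost_sub_one_le hf k p.1 q.1 b

lemma exists_liftCost_le_pathLen (hf : ∀ x y : A, dist (f x) (f y) = dist (x : X) (y : X))
    [Finite A] (hs : 2 < s) {c : List (A × ZMod s)} (hc : c.IsChain (stepAdm A s))
    (hp : c.head? = some p) (hq : c.getLast? = some q) :
    ∃ k : ℤ, (k : ZMod s) = q.2 - p.2 ∧ liftCost f k p.1 q.1 ≤ pathLen A f s c := by
  induction c generalizing p with
  | nil => simp at hp
  | cons p' tl ih =>
    obtain rfl : p' = p := by simpa using hp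
    cases tl with
    | nil =>
      obtain rfl : p' = q := by simpa using hq
      exact ⟨0, by simp, by simp [pathLen, liftCost_zero]⟩
    | cons p₁ rest =>
      rw [List.isChain_cons_cons] at hc
      obtain ⟨k, hk, hle⟩ := ih hc.2 rfl (by simpa using hq)
      obtain ⟨j, hj, hstep⟩ := exists_liftCost_le_rho_add hf hs hc.1
      refine ⟨k + j, by push_cast; rw [hk, hj]; ring, ?_⟩
      calc liftCost f (k + j) p'.1 q.1
          ≤ rho A f s p' p₁ + liftCost f k p₁.1 q.1 := hstep k q.1
        _ ≤ rho A f s p' p₁ + pathLen A f s (p₁ :: rest) := by linarith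
        _ = pathLen A f s (p' :: p₁ :: rest) := rfl

lemma graphDist_eq_rho (h : stepAdm A s p q)
    (hle : ∀ c : List (A × ZMod s), c.IsChain (stepAdm A s) → c.head? = some p →
      c.getLast? = some q → rho A f s p q ≤ pathLen A f s c) :
    graphDist A f s p q = rho A f s p q := by
  refine IsLeast.csInf_eq ⟨⟨[p, q], rfl, rfl, List.isChain_pair.2 h, ?_⟩, ?_⟩
  · simp [pathLen]
  · rintro r ⟨c, hp, hq, hc, rfl⟩
    exact hle c hc hp hq

lemma graphDist_eq_rho_of_le_liftCost (hf : ∀ x y : A, dist (f x) (f y) = dist (x : X) (y : X))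
    [Finite A] (hs : 2 < s) {δ : ℝ} (hδ : ∀ x y : A, δ ≤ dist (x : X) (f y))
    (hδ0 : 0 ≤ δ) {j : ℕ} (hj : j ≤ 1) (hpq : q.2 = p.2 + j)
    (hr : rho A f s p q ≤ liftCost f j p.1 q.1) (hrδ : rho A f s p q ≤ δ * (s - 2)) :
    graphDist A f s p q = rho A f s p q := by
  have hstep : stepAdm A s p q := by
    interval_cases j
    · exact Or.inl (by simpa using hpq)
    · exact Or.inr (Or.inl (by simpa using hpq))
  refine graphDist_eq_rho hstep fun c hc hp hq => ?_
  obtain ⟨k, hk, hle⟩ := exists_liftCost_le_pathLen hf hs hc hp hq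
  rcases eq_or_ne k j with rfl | hkj
  · exact hr.trans hle
  have hdvd : (s : ℤ) ∣ k - j :=
    (ZMod.intCast_eq_intCast_iff_dvd_sub j k s).1 (by rw [hk, hpq]; push_cast; ring)
  have hwind : (s : ℤ) ≤ |k - j| :=
    Int.le_of_dvd (abs_pos.2 (sub_ne_zero.2 hkj)) ((dvd_abs _ _).2 hdvd)
  have hks : (s : ℝ) - 2 ≤ ((|k| : ℤ) : ℝ) := by
    have := abs_sub k j
    rw [abs_of_nonneg (by positivity : (0 : ℤ) ≤ j)] at this
    exact_mod_cast (by omega : (s : ℤ) - 2 ≤ |k|)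
  calc rho A f s p q ≤ δ * (s - 2) := hrδ
    _ ≤ δ * ((|k| : ℤ) : ℝ) := mul_le_mul_of_nonneg_left hks hδ0
    _ ≤ liftCost f k p.1 q.1 := mul_abs_le_liftCost f hδ k _ _
    _ ≤ pathLen A f s c := hle

end GraphDist

section Shift

variable {X : Type*} {A : Set X} {s : ℕ}

lemma stepAdm_shift (t : ZMod s) {p q : A × ZMod s} (h : stepAdm A s p q) :
    stepAdm A s (p.1, p.2 + t) (q.1, q.2 + t) := by
  rcases h with h | h | h <;> simp only [stepAdm, h] <;> ring_nf <;> simp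

variable [MetricSpace X] {f : A → X}

lemma rho_shift (t : ZMod s) (p q : A × ZMod s) :
    rho A f s (p.1, p.2 + t) (q.1, q.2 + t) = rho A f s p q := by
  have e : p.2 + t - 1 = p.2 - 1 + t := by ring
  simp only [rho, add_left_inj, add_right_comm _ t, e]

lemma pathLen_map_shift (t : ZMod s) (c : List (A × ZMod s)) :
    pathLen A f s (c.map fun p => (p.1, p.2 + t)) = pathLen A f s c := by
  induction c with
  | nil => rfl
  | cons p rest ih =>
    cases rest with
    | nil => rfl
    | cons q rest => exact congrArg₂ (· + ·) (rho_shift t p q) ih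

lemma graphDist_shift (t : ZMod s) (p q : A × ZMod s) :
    graphDist A f s (p.1, p.2 + t) (q.1, q.2 + t) = graphDist A f s p q := by
  have key : ∀ (t : ZMod s) (p q : A × ZMod s),
      {r | ∃ c : List (A × ZMod s), c.head? = some p ∧ c.getLast? = some q ∧
        c.IsChain (stepAdm A s) ∧ pathLen A f s c = r} ⊆
      {r | ∃ c : List (A × ZMod s), c.head? = some (p.1, p.2 + t) ∧
        c.getLast? = some (q.1, q.2 + t) ∧ c.IsChain (stepAdm A s) ∧ pathLen A f s c = r} := by
    rintro t p q r ⟨c, hp, hq, hc, rfl⟩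
    exact ⟨c.map fun p => (p.1, p.2 + t), by simp [hp], by simp [hq],
      List.isChain_map _ |>.2 (hc.imp fun _ _ => stepAdm_shift t), pathLen_map_shift t c⟩
  refine congrArg sInf (Set.Subset.antisymm ?_ (key t p q))
  have h := key (-t) (p.1, p.2 + t) (q.1, q.2 + t)
  simp only [add_neg_cancel_right, Prod.mk.eta] at h
  exact h

end Shift

theorem stmt19_general {X : Type*} [MetricSpace X] (A : Set X) [Fintype A]
    (f : A → X) (hf : ∀ x y : A, dist (f x) (f y) = dist (x : X) (y : X))
    (δ Δ : ℝ)
    (hδ : IsLeast {d : ℝ | ∃ x y : A, d = dist (x : X) (f y)} δ) (hδpos : 0 < δ)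
    (hΔ : Δ = Metric.diam (A ∪ Set.range f))
    (s : ℕ) (hs : Δ ≤ δ * ((s : ℝ) - 2)) :
    (∀ (a b : A) (x : ZMod s), graphDist A f s (a, x) (b, x) = dist (a : X) (b : X)) ∧
    (∀ (a b : A) (x : ZMod s), graphDist A f s (a, x) (b, x + 1) = dist (a : X) (f b)) ∧
    (∀ p q : A × ZMod s,
      graphDist A f s (p.1, p.2 + 1) (q.1, q.2 + 1) = graphDist A f s p q) ∧
    (fun p : A × ZMod s => (p.1, p.2 + 1))^[s] = id := by
  have hδle : ∀ x y : A, δ ≤ dist (x : X) (f y) := fun x y => hδ.2 ⟨x, y, rfl⟩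
  have hdiam : ∀ u ∈ A ∪ Set.range f, ∀ v ∈ A ∪ Set.range f,
      dist u v ≤ δ * (s - 2) :=
    fun u hu v hv => (Metric.dist_le_diam_of_mem
      (A.toFinite.union (Set.finite_range f)).isBounded hu hv).trans (hΔ ▸ hs)
  have hs2 : 2 < s := by
    obtain ⟨x, y, rfl⟩ := hδ.1
    have := hdiam x (Or.inl x.2) (f y) (Or.inr ⟨y, rfl⟩)
    exact_mod_cast (by nlinarith : (2 : ℝ) < s)
  refine ⟨fun a b x => ?_, fun a b x => ?_, fun p q => graphDist_shift 1 p q, ?_⟩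
  · have hρ : rho A f s (a, x) (b, x) = dist (a : X) b := rho_of_eq rfl
    rw [← hρ]
    refine graphDist_eq_rho_of_le_liftCost hf hs2 hδle hδpos.le (j := 0) zero_le_one (by simp)
      ?_ ?_
    · rw [hρ, Nat.cast_zero, liftCost_zero]; rfl
    · rw [hρ]; exact hdiam _ (Or.inl a.2) _ (Or.inl b.2)
  · have hρ : rho A f s (a, x) (b, x + 1) = dist (a : X) (f b) := rho_of_eq_add_one hs2 rfl
    rw [← hρ]
    refine graphDist_eq_rho_of_le_liftCost hf hs2 hδle hδpos.le (j := 1) le_rfl (by simp)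
      ?_ ?_
    · rw [hρ, Nat.cast_one]; exact dist_le_liftCost_one hf a b
    · rw [hρ]; exact hdiam _ (Or.inl a.2) _ (Or.inr ⟨b, rfl⟩)
  · change (Prod.map id (· + 1))^[s] = id
    rw [Prod.map_iterate, Function.iterate_id, add_right_iterate]
    ext p <;> simp

/-- The construction for Rohlin's Lemma for isometries: let `A` be a nonempty finite subset
of a metric space `X`, `f : A → X` a partial isometry with
`δ = min {d(x, f y) : x, y ∈ A} > 0` and `Δ = diam (A ∪ f[A])`, and let `F = ZMod s` be a
cyclic order of size `s` with `δ·(s−2) ≥ Δ`.  Then for the weighted-graph metric `D` on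
`B = A × F` one has `D(a•x, b•x) = d(a,b)` and `D(a•x, b•x⁺) = d(a, f b)`, and the shift
`g(a•x) = a•x⁺` is an isometry of `(B, D)` with `g ^ s = id`. -/
theorem stmt19 {X : Type*} [MetricSpace X] (A : Set X) [Fintype A] [Nonempty A]
    (f : A → X) (hf : ∀ x y : A, dist (f x) (f y) = dist (x : X) (y : X))
    (δ Δ : ℝ)
    (hδ : IsLeast {d : ℝ | ∃ x y : A, d = dist (x : X) (f y)} δ) (hδpos : 0 < δ)
    (hΔ : Δ = Metric.diam (A ∪ Set.range f))
    (s : ℕ) [NeZero s] (hs : Δ ≤ δ * ((s : ℝ) - 2)) :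
    (∀ (a b : A) (x : ZMod s), graphDist A f s (a, x) (b, x) = dist (a : X) (b : X)) ∧
    (∀ (a b : A) (x : ZMod s), graphDist A f s (a, x) (b, x + 1) = dist (a : X) (f b)) ∧
    (∀ p q : A × ZMod s,
      graphDist A f s (p.1, p.2 + 1) (q.1, q.2 + 1) = graphDist A f s p q) ∧
    (fun p : A × ZMod s => (p.1, p.2 + 1))^[s] = id :=
  stmt19_general A f hf δ Δ hδ hδpos hΔ s hs
end
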